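/- arXiv:1212.3456 — 11 statements merged into one kernel-verified Lean document; each statement's English description precedes it below -/
import Mathlib

section
/- For every finite set F of circles in the plane ℝ², the operator X ↦ ch(X) := {C ∈ F : C ⊆ conv(⋃_{D∈X} D)} is a closure operator on F satisfying ch(∅)=∅ and the anti-exchange property; hence (F, ch) is a convex geometry. -/
/-!
The closure-operator axioms are formal. For anti-exchange put `A = conv(⋃ X)`, which is
compact, and compare the support functions `h_C(u) = ⟨u, c⟩ + r‖u‖` of the two circles. As
`D ⊄ A`, some point of `D` is strictly separated from `A` by every direction `u` of a nonempty
open set; for those `u` the inclusions `C ⊆ conv(A ∪ D)` and `D ⊆ conv(A ∪ C)` give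
`h_C(u) ≤ h_D(u)` and `h_D(u) ≤ h_C(u)`. Finally `u ↦ ⟨u, c - d⟩ + (r - s)‖u‖` cannot vanish on
an open set unless `c = d` and `r = s`: compare `u` with its rotations `u ± τu⊥`, which have
equal length.
-/

/-- A circle in the plane `ℝ²`. -/
def IsCircle (C : Set (ℝ × ℝ)) : Prop :=
  ∃ u v r : ℝ, 0 ≤ r ∧ C = {p : ℝ × ℝ | (p.1 - u) ^ 2 + (p.2 - v) ^ 2 = r ^ 2}

/-- The closure operator determined by a set `F` of circles:
`ch F X = {C ∈ F : C ⊆ conv(⋃ X)}`. -/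
def circCh (F X : Set (Set (ℝ × ℝ))) : Set (Set (ℝ × ℝ)) :=
  {C | C ∈ F ∧ C ⊆ convexHull ℝ (⋃₀ X)}

open Set

section ConvexCompact

variable {E : Type*} [AddCommGroup E] [Module ℝ E] [TopologicalSpace E] [ContinuousAdd E]
  [ContinuousSMul ℝ E]

theorem IsCompact.convexJoin {s t : Set E} (hs : IsCompact s) (ht : IsCompact t) :
    IsCompact (_root_.convexJoin ℝ s t) := by
  have : _root_.convexJoin ℝ s t =
      (fun q : ℝ × E × E => (1 - q.1) • q.2.1 + q.1 • q.2.2) '' (Icc 0 1 ×ˢ s ×ˢ t) := by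
    ext z
    simp only [mem_convexJoin, segment_eq_image, mem_image, mem_prod, Prod.exists]
    aesop
  rw [this]
  exact (isCompact_Icc.prod (hs.prod ht)).image (by fun_prop)

theorem IsCompact.convexHull_union {s t : Set E} (hs : IsCompact (convexHull ℝ s))
    (ht : IsCompact (convexHull ℝ t)) : IsCompact (convexHull ℝ (s ∪ t)) := by
  rcases s.eq_empty_or_nonempty with rfl | hs₀
  · simpa using ht
  rcases t.eq_empty_or_nonempty with rfl | ht₀
  · simpa using hs
  rw [_root_.convexHull_union hs₀ ht₀]
  exact hs.convexJoin ht

theorem Set.Finite.isCompact_convexHull_sUnion {X : Set (Set E)} (hX : X.Finite)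
    (h : ∀ s ∈ X, IsCompact (convexHull ℝ s)) : IsCompact (convexHull ℝ (⋃₀ X)) := by
  induction X, hX using Set.Finite.induction_on with
  | empty => simp
  | @insert s X _ _ ih =>
    rw [sUnion_insert]
    exact (h s (mem_insert _ _)).convexHull_union (ih fun t ht => h t (mem_insert_of_mem _ ht))

end ConvexCompact

namespace Plane

-- `ℝ × ℝ` carries the sup norm, so the Euclidean structure is written out in coordinates.
def dot (u q : ℝ × ℝ) : ℝ := u.1 * q.1 + u.2 * q.2

def circle (c : ℝ × ℝ) (r : ℝ) : Set (ℝ × ℝ) :=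
  {p | (p.1 - c.1) ^ 2 + (p.2 - c.2) ^ 2 = r ^ 2}

noncomputable def circleSupport (c : ℝ × ℝ) (r : ℝ) (u : ℝ × ℝ) : ℝ :=
  dot u c + r * √(u.1 ^ 2 + u.2 ^ 2)

variable {c d u p : ℝ × ℝ} {r s M : ℝ}

theorem mem_circle_add_radius : (c.1 + r, c.2) ∈ circle c r := by
  simp [circle]

theorem circle_eq_image_sphere (hr : 0 ≤ r) :
    circle c r = Complex.equivRealProdCLM '' Metric.sphere ⟨c.1, c.2⟩ r := by
  ext p
  rw [ContinuousLinearEquiv.image_eq_preimage_symm, mem_preimage, mem_sphere_iff_norm,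
    ← sq_eq_sq₀ (norm_nonneg _) hr, Complex.sq_norm, Complex.normSq_apply]
  simp [circle, sq]

theorem isCompact_convexHull_circle (hr : 0 ≤ r) : IsCompact (convexHull ℝ (circle c r)) := by
  rw [circle_eq_image_sphere hr,
    ← IsLinearMap.image_convexHull (f := Complex.equivRealProdCLM)
      Complex.equivRealProdCLM.toLinearMap.isLinear,
    convexHull_sphere_eq_closedBall _ hr]
  exact (isCompact_closedBall _ _).image Complex.equivRealProdCLM.continuous

theorem dot_le_circleSupport (hr : 0 ≤ r) (hp : p ∈ circle c r) :
    dot u p ≤ circleSupport c r u := by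
  have hCS : (dot u p - dot u c) ^ 2 ≤ (r * √(u.1 ^ 2 + u.2 ^ 2)) ^ 2 := by
    rw [mul_pow, Real.sq_sqrt (by positivity), ← hp]
    simp only [dot]
    nlinarith [sq_nonneg (u.1 * (p.2 - c.2) - u.2 * (p.1 - c.1))]
  have := le_of_sq_le_sq hCS (by positivity)
  unfold circleSupport
  linarith

theorem sq_add_sq_pos (hu : u ≠ 0) : 0 < u.1 ^ 2 + u.2 ^ 2 := by
  contrapose! hu
  ext <;> simp only [Prod.fst_zero, Prod.snd_zero] <;> nlinarith [sq_nonneg u.1, sq_nonneg u.2]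

theorem exists_dot_eq_circleSupport (hu : u ≠ 0) :
    ∃ p ∈ circle c r, dot u p = circleSupport c r u := by
  set n := √(u.1 ^ 2 + u.2 ^ 2)
  have hn2 : n ^ 2 = u.1 ^ 2 + u.2 ^ 2 := Real.sq_sqrt (by positivity)
  have hn : n ≠ 0 := (Real.sqrt_pos.2 (sq_add_sq_pos hu)).ne'
  refine ⟨(c.1 + r / n * u.1, c.2 + r / n * u.2), ?_, ?_⟩
  · simp only [circle, mem_ofPred_eq]
    field_simp
    linear_combination r ^ 2 * hn2.symm
  · change _ = dot u c + r * n
    simp only [dot]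
    field_simp
    linear_combination (-r) * hn2

theorem dot_le_of_mem_convexHull {t : Set (ℝ × ℝ)} (h : ∀ q ∈ t, dot u q ≤ M) :
    ∀ q ∈ convexHull ℝ t, dot u q ≤ M := by
  refine fun q hq => convexHull_min h (convex_halfSpace_le ?_ M) hq
  exact ⟨fun p q => by simp only [dot, Prod.fst_add, Prod.snd_add]; ring,
    fun a p => by simp only [dot, Prod.smul_fst, Prod.smul_snd, smul_eq_mul]; ring⟩

theorem circleSupport_le_of_subset_convexHull {t : Set (ℝ × ℝ)} (hu : u ≠ 0)
    (hC : circle c r ⊆ convexHull ℝ t) (h : ∀ q ∈ t, dot u q ≤ M) :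
    circleSupport c r u ≤ M := by
  obtain ⟨p, hp, hpu⟩ := exists_dot_eq_circleSupport (c := c) (r := r) hu
  exact hpu ▸ dot_le_of_mem_convexHull h p (hC hp)

theorem circleSupport_eq_of_subset_convexHull_union {S : Set (ℝ × ℝ)} (hr : 0 ≤ r) (hs : 0 ≤ s)
    (hu : u ≠ 0) (hS : ∀ q ∈ S, dot u q ≤ M) (hM : M < circleSupport d s u)
    (hCD : circle c r ⊆ convexHull ℝ (S ∪ circle d s))
    (hDC : circle d s ⊆ convexHull ℝ (S ∪ circle c r)) :
    circleSupport c r u = circleSupport d s u := by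
  have bound : ∀ {e t}, 0 ≤ t → ∀ q ∈ S ∪ circle e t, dot u q ≤ max M (circleSupport e t u) := by
    rintro e t ht q (hq | hq)
    · exact le_max_of_le_left (hS q hq)
    · exact le_max_of_le_right (dot_le_circleSupport ht hq)
  have hCD' := circleSupport_le_of_subset_convexHull hu hCD (bound hs)
  have hDC' := circleSupport_le_of_subset_convexHull hu hDC (bound hr)
  rw [max_eq_right hM.le] at hCD'
  exact le_antisymm hCD' ((le_max_iff.1 hDC').resolve_left hM.not_ge)

theorem isOpen_setOf_forall_dot_add_one_lt {A : Set (ℝ × ℝ)} (hA : IsCompact A) :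
    IsOpen {u | ∀ q ∈ A, dot u q + 1 < dot u p} := by
  refine isOpen_iff_eventually.2 fun u hu => hA.eventually_forall_of_forall_eventually
    fun q hq => ContinuousAt.eventually_lt ?_ ?_ (hu q hq)
  all_goals unfold dot; fun_prop

-- The unit margin, rather than a strict inequality, bounds `dot u` on `A` uniformly below
-- `dot u p`, with no supremum over `A`.
theorem exists_ne_zero_forall_dot_add_one_lt {A : Set (ℝ × ℝ)} (hA : IsClosed A)
    (hAc : Convex ℝ A) (hp : p ∉ A) : ∃ u ≠ 0, ∀ q ∈ A, dot u q + 1 < dot u p := by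
  rcases A.eq_empty_or_nonempty with rfl | ⟨q₀, hq₀⟩
  · exact ⟨(1, 0), by simp, by simp⟩
  obtain ⟨f, t, hfA, hfp⟩ := geometric_hahn_banach_closed_point hAc hA hp
  have hf : ∀ q, f q = dot (f (1, 0), f (0, 1)) q := fun q => by
    conv_lhs => rw [show q = q.1 • (1, 0) + q.2 • (0, 1) by ext <;> simp]
    simp only [map_add, map_smul, smul_eq_mul, dot]
    ring
  set m := f p - t
  have hm : 0 < m := sub_pos.2 hfp
  set u : ℝ × ℝ := (2 / m * f (1, 0), 2 / m * f (0, 1))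
  have hu : ∀ q, dot u q = 2 / m * f q := fun q => by rw [hf]; simp only [u, dot]; ring
  have hsep : ∀ q ∈ A, dot u q + 1 < dot u p := fun q hq => by
    have hft : 2 / m * t = 2 / m * f p - 2 := by field_simp; ring
    rw [hu, hu]
    linarith [mul_lt_mul_of_pos_left (hfA q hq) (div_pos two_pos hm)]
  refine ⟨u, fun h0 => ?_, hsep⟩
  have := hsep q₀ hq₀
  rw [h0] at this
  norm_num [dot] at this

theorem circleSupport_rotate (c : ℝ × ℝ) (r : ℝ) (u : ℝ × ℝ) (τ : ℝ) :
    circleSupport c r (u.1 - τ * u.2, u.2 + τ * u.1) =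
      (u.1 - τ * u.2) * c.1 + (u.2 + τ * u.1) * c.2 +
        r * (√(1 + τ ^ 2) * √(u.1 ^ 2 + u.2 ^ 2)) := by
  rw [← Real.sqrt_mul (by positivity), circleSupport, dot]
  ring_nf

theorem eq_of_eqOn_circleSupport {U : Set (ℝ × ℝ)} (hU : IsOpen U) (hu : u ∈ U) (hu₀ : u ≠ 0)
    (h : EqOn (circleSupport c r) (circleSupport d s) U) : c = d ∧ r = s := by
  obtain ⟨ε, hε, hball⟩ := Metric.isOpen_iff.1
    (hU.preimage (by fun_prop : Continuous fun τ : ℝ => (u.1 - τ * u.2, u.2 + τ * u.1))) 0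
    (by simpa using hu)
  have hrot : ∀ τ, |τ| < ε → circleSupport c r (u.1 - τ * u.2, u.2 + τ * u.1) =
      circleSupport d s (u.1 - τ * u.2, u.2 + τ * u.1) := fun τ hτ =>
    h (hball (by simpa using hτ))
  have h₀ := hrot 0 (by simpa using hε)
  have h₁ := hrot (ε / 2) (by rw [abs_of_pos (half_pos hε)]; linarith)
  have h₂ := hrot (-(ε / 2)) (by rw [abs_neg, abs_of_pos (half_pos hε)]; linarith)
  simp only [circleSupport_rotate] at h₀ h₁ h₂
  set n := √(u.1 ^ 2 + u.2 ^ 2)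
  set g := √(1 + (ε / 2) ^ 2)
  have hn : 0 < n := Real.sqrt_pos.2 (sq_add_sq_pos hu₀)
  have hg : 1 < g := Real.lt_sqrt zero_le_one |>.2 (by nlinarith)
  rw [neg_sq] at h₂
  norm_num at h₀
  -- Both rotations have length `g * n`, so averaging them against `u` isolates `r - s`.
  have hrs : r = s := by
    have : (r - s) * (n * (g - 1)) = 0 := by linear_combination (h₁ + h₂) / 2 - h₀
    have := (mul_eq_zero.1 this).resolve_right (by positivity)
    linarith
  subst hrs
  have hpar : u.1 * (c.1 - d.1) + u.2 * (c.2 - d.2) = 0 := by linear_combination h₀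
  have hperp : u.1 * (c.2 - d.2) - u.2 * (c.1 - d.1) = 0 := by
    have : ε * (u.1 * (c.2 - d.2) - u.2 * (c.1 - d.1)) = 0 := by linear_combination h₁ - h₂
    exact (mul_eq_zero.1 this).resolve_left hε.ne'
  have hu₂ := sq_add_sq_pos hu₀
  refine ⟨Prod.ext ?_ ?_, rfl⟩
  · have : (u.1 ^ 2 + u.2 ^ 2) * (c.1 - d.1) = 0 := by linear_combination u.1 * hpar - u.2 * hperp
    linarith [(mul_eq_zero.1 this).resolve_left hu₂.ne']
  · have : (u.1 ^ 2 + u.2 ^ 2) * (c.2 - d.2) = 0 := by linear_combination u.2 * hpar + u.1 * hperp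
    linarith [(mul_eq_zero.1 this).resolve_left hu₂.ne']

theorem circle_eq_of_subset_convexHull_union {S : Set (ℝ × ℝ)} (hS : IsCompact (convexHull ℝ S))
    (hr : 0 ≤ r) (hs : 0 ≤ s) (hDS : ¬circle d s ⊆ convexHull ℝ S)
    (hCD : circle c r ⊆ convexHull ℝ (S ∪ circle d s))
    (hDC : circle d s ⊆ convexHull ℝ (S ∪ circle c r)) : c = d ∧ r = s := by
  obtain ⟨p, hpD, hpS⟩ := not_subset.1 hDS
  obtain ⟨u, hu₀, hu⟩ :=
    exists_ne_zero_forall_dot_add_one_lt hS.isClosed (convex_convexHull ℝ S) hpS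
  refine eq_of_eqOn_circleSupport (isOpen_setOf_forall_dot_add_one_lt hS) hu hu₀ fun v hv => ?_
  rcases eq_or_ne v 0 with rfl | hv₀
  · simp [circleSupport, dot]
  exact circleSupport_eq_of_subset_convexHull_union hr hs hv₀ (M := dot v p - 1)
    (fun q hq => by linarith [hv q (subset_convexHull ℝ S hq)])
    (by linarith [dot_le_circleSupport (u := v) hs hpD]) hCD hDC

end Plane

theorem IsCircle.exists_eq_circle {C : Set (ℝ × ℝ)} (h : IsCircle C) :
    ∃ c r, 0 ≤ r ∧ C = Plane.circle c r := by
  obtain ⟨u, v, r, hr, rfl⟩ := h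
  exact ⟨(u, v), r, hr, rfl⟩

section circCh

variable {F X Y : Set (Set (ℝ × ℝ))}

theorem subset_circCh (hXF : X ⊆ F) : X ⊆ circCh F X :=
  fun _ hC => ⟨hXF hC, (subset_sUnion_of_mem hC).trans (subset_convexHull ℝ _)⟩

theorem circCh_circCh : circCh F (circCh F X) = circCh F X := by
  refine Subset.antisymm (fun C hC => ⟨hC.1, hC.2.trans ?_⟩) (subset_circCh fun _ hC => hC.1)
  exact convexHull_min (sUnion_subset fun _ hD => hD.2) (convex_convexHull ℝ _)

theorem circCh_mono (h : X ⊆ Y) : circCh F X ⊆ circCh F Y :=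
  fun _ hC => ⟨hC.1, hC.2.trans (convexHull_mono (sUnion_mono h))⟩

theorem circCh_empty (hcirc : ∀ C ∈ F, IsCircle C) : circCh F ∅ = ∅ := by
  refine eq_empty_of_forall_notMem fun C ⟨hC, hC₀⟩ => ?_
  obtain ⟨c, r, hr, rfl⟩ := (hcirc C hC).exists_eq_circle
  simpa using hC₀ (Plane.mem_circle_add_radius)

theorem circCh_antiExchange (hF : F.Finite) (hcirc : ∀ C ∈ F, IsCircle C) (hXF : X ⊆ F)
    (hX : circCh F X = X) {C D : Set (ℝ × ℝ)} (hC : C ∈ F) (hD : D ∈ F) (hDX : D ∉ X)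
    (hCD : C ≠ D) (hCXD : C ∈ circCh F (X ∪ {D})) : D ∉ circCh F (X ∪ {C}) := by
  rintro ⟨-, hDXC⟩
  replace hCXD := hCXD.2
  rw [sUnion_union, sUnion_singleton] at hCXD hDXC
  have hA : IsCompact (convexHull ℝ (⋃₀ X)) :=
    (hF.subset hXF).isCompact_convexHull_sUnion fun E hE => by
      obtain ⟨e, t, ht, rfl⟩ := (hcirc E (hXF hE)).exists_eq_circle
      exact Plane.isCompact_convexHull_circle ht
  obtain ⟨c, r, hr, rfl⟩ := (hcirc C hC).exists_eq_circle
  obtain ⟨d, s, hs, rfl⟩ := (hcirc D hD).exists_eq_circle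
  obtain ⟨rfl, rfl⟩ := Plane.circle_eq_of_subset_convexHull_union hA hr hs
    (fun h => hDX (hX ▸ ⟨hD, h⟩)) hCXD hDXC
  exact hCD rfl

end circCh

/-- For every finite set `F` of circles in the plane, `circCh F` is a
closure operator on `F` with `circCh F ∅ = ∅` satisfying the anti-exchange property,
i.e. `(F, circCh F)` is a convex geometry. -/
theorem stmt1 (F : Set (Set (ℝ × ℝ))) (hF : F.Finite) (hcirc : ∀ C ∈ F, IsCircle C) :
    (∀ X, X ⊆ F → X ⊆ circCh F X) ∧
    (∀ X, X ⊆ F → circCh F (circCh F X) = circCh F X) ∧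
    (∀ X Y, X ⊆ Y → Y ⊆ F → circCh F X ⊆ circCh F Y) ∧
    circCh F ∅ = ∅ ∧
    (∀ X, X ⊆ F → circCh F X = X →
      ∀ C ∈ F, ∀ D ∈ F, C ∉ X → D ∉ X → C ≠ D →
        C ∈ circCh F (X ∪ {D}) → D ∉ circCh F (X ∪ {C})) :=
  ⟨fun _ => subset_circCh, fun _ _ => circCh_circCh, fun _ _ h _ => circCh_mono h,
    circCh_empty hcirc, fun _ hXF hX _ hC _ hD _ hDX hCD =>
      circCh_antiExchange hF hcirc hXF hX hC hD hDX hCD⟩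
end

section
/- Let F be a finite set of collinear circles (all centers on the x-axis) and let ch be the associated closure operator ch(X) = {C ∈ F : C ⊆ conv(⋃ X)}. For A,B ∈ F define the horizontal interval [A,B] = {C ∈ F : lend(A) ⊑ lend(C) and rend(C) ⊑ rend(B)}. Then every horizontal interval [A,B] is a closed set of (F, ch). -/
/-- A collinear circle: a circle in the plane whose center `(u,0)` lies on the x-axis,
with radius `r ≥ 0`. -/
structure CC where
  u : ℝ
  r : ℝ
  hr : 0 ≤ r

/-- The point set of a collinear circle. -/
def CC.pts (C : CC) : Set (ℝ × ℝ) := {p : ℝ × ℝ | (p.1 - C.u) ^ 2 + p.2 ^ 2 = C.r ^ 2}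

/-- Leftmost point (x-coordinate). -/
def CC.lmpt (C : CC) : ℝ := C.u - C.r

/-- Rightmost point (x-coordinate). -/
def CC.rmpt (C : CC) : ℝ := C.u + C.r

/-- `lend C ⊑ lend D` for the lexicographic order on left ends `(ℓ(C), -r(C))`. -/
def lendLe (C D : CC) : Prop := C.lmpt < D.lmpt ∨ (C.lmpt = D.lmpt ∧ D.r ≤ C.r)

/-- `rend C ⊑ rend D` for the lexicographic order on right ends `(ρ(C), r(C))`. -/
def rendLe (C D : CC) : Prop := C.rmpt < D.rmpt ∨ (C.rmpt = D.rmpt ∧ C.r ≤ D.r)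

/-- The closure operator: `ch F X = {C ∈ F : C ⊆ conv(⋃_{D ∈ X} D)}`. -/
def ch (F X : Set CC) : Set CC :=
  {C | C ∈ F ∧ C.pts ⊆ convexHull ℝ (⋃ D ∈ X, CC.pts D)}

/-- The horizontal interval `[A,B] = {C ∈ F : lend A ⊑ lend C, rend C ⊑ rend B}`. -/
def hInt (F : Set CC) (A B : CC) : Set CC :=
  {C | C ∈ F ∧ lendLe A C ∧ rendLe C B}

/-- `F` is a concave set of collinear circles. -/
def ConcaveF (F : Set CC) : Prop :=
  ∀ C₁ ∈ F, ∀ C₂ ∈ F, ∀ C₃ ∈ F, lendLe C₁ C₂ → rendLe C₂ C₃ →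
    C₂.pts ⊆ convexHull ℝ (C₁.pts ∪ C₃.pts)

/-- For a finite set `F` of collinear circles, every horizontal
interval `[A,B]` (with `A, B ∈ F`) is a closed set of `(F, ch)`. -/
lemma key_ineq (X : Set CC) (C : CC) (c s : ℝ) (hcs : c^2 + s^2 = 1) (m : ℝ)
    (hm : ∀ D ∈ X, m ≤ c * D.u - D.r)
    (hC : C.pts ⊆ convexHull ℝ (⋃ D ∈ X, CC.pts D)) : m ≤ c * C.u - C.r := by
  have hconv : Convex ℝ {p : ℝ × ℝ | m ≤ c * p.1 + s * p.2} := by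
    apply convex_halfSpace_ge
    exact ⟨fun p q => by simp; ring, fun a p => by simp; ring⟩
  have hsub : (⋃ D ∈ X, CC.pts D) ⊆ {p : ℝ × ℝ | m ≤ c * p.1 + s * p.2} := by
    intro p hp
    simp only [Set.mem_iUnion, exists_prop] at hp
    obtain ⟨D, hD, hpD⟩ := hp
    have h1 := hm D hD
    have h2 : (p.1 - D.u)^2 + p.2^2 = D.r^2 := hpD
    have hr := D.hr
    have key : c * (p.1 - D.u) + s * p.2 ≥ -D.r := by
      nlinarith [sq_nonneg (s * (p.1 - D.u) - c * p.2),
        sq_nonneg (c * (p.1 - D.u) + s * p.2 + D.r)]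
    simp only [Set.mem_setOf_eq]
    linarith
  have hhull := convexHull_min hsub hconv
  have hp0 : ((C.u - C.r * c, -(C.r * s)) : ℝ × ℝ) ∈ C.pts := by
    simp only [CC.pts, Set.mem_setOf_eq]
    linear_combination C.r^2 * hcs
  have h3 := hhull (hC hp0)
  simp only [Set.mem_setOf_eq] at h3
  have heq : c * (C.u - C.r * c) + s * -(C.r * s) = c * C.u - C.r := by
    linear_combination (-C.r) * hcs
  linarith

lemma exists_c (X : Set CC) (hX : X.Finite) (x y : CC → ℝ)
    (h : ∀ D ∈ X, 0 ≤ x D ∧ (0 < y D → 0 < x D)) :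
    ∃ c : ℝ, 0 < c ∧ c < 1 ∧ ∀ D ∈ X, y D * (1 - c) ≤ x D * c := by
  classical
  set f : CC → ℝ := fun D => if y D ≤ 0 then (1:ℝ)/2 else y D / (x D + y D) with hf
  set T := insert ((1:ℝ)/2) (hX.toFinset.image f) with hTdef
  have hT : T.Nonempty := Finset.insert_nonempty _ _
  set c := T.max' hT with hc
  have hhalf : (1:ℝ)/2 ≤ c := Finset.le_max' _ _ (Finset.mem_insert_self _ _)
  have hc1 : c < 1 := by
    rw [hc, Finset.max'_lt_iff]
    intro b hb
    rcases Finset.mem_insert.mp hb with hb | hb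
    · rw [hb]; norm_num
    · obtain ⟨D, hD, rfl⟩ := Finset.mem_image.mp hb
      by_cases hy : y D ≤ 0
      · simp only [hf, if_pos hy]; norm_num
      · push_neg at hy
        have hD' : D ∈ X := hX.mem_toFinset.mp hD
        have hx : 0 < x D := (h D hD').2 hy
        simp only [hf, if_neg (not_le.mpr hy)]
        rw [div_lt_one (by linarith)]
        linarith
  refine ⟨c, by linarith, hc1, ?_⟩
  intro D hD
  have hcf : f D ≤ c :=
    Finset.le_max' _ _ (Finset.mem_insert_of_mem
      (Finset.mem_image_of_mem f (hX.mem_toFinset.mpr hD)))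
  by_cases hy : y D ≤ 0
  · have hx := (h D hD).1
    nlinarith
  · push_neg at hy
    have hx : 0 < x D := (h D hD).2 hy
    simp only [hf, if_neg (not_le.mpr hy)] at hcf
    rw [div_le_iff₀ (by linarith)] at hcf
    nlinarith

lemma key_left (X : Set CC) (hX : X.Finite) (A C : CC)
    (h : ∀ D ∈ X, lendLe A D)
    (hC : C.pts ⊆ convexHull ℝ (⋃ D ∈ X, CC.pts D)) : lendLe A C := by
  have h1 : ∀ D ∈ X, A.lmpt ≤ D.lmpt := by
    intro D hD
    rcases h D hD with h' | ⟨h', _⟩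
    · exact h'.le
    · exact h'.le
  have hm1 : ∀ D ∈ X, A.lmpt ≤ 1 * D.u - D.r := by
    intro D hD
    have := h1 D hD
    simp only [CC.lmpt] at this ⊢
    linarith
  have step1 : A.lmpt ≤ C.lmpt := by
    have h2 := key_ineq X C 1 0 (by norm_num) A.lmpt hm1 hC
    simp only [CC.lmpt] at h2 ⊢
    linarith
  rcases lt_or_eq_of_le step1 with hlt | heq
  · exact Or.inl hlt
  · refine Or.inr ⟨heq, ?_⟩
    have hxy : ∀ D ∈ X, 0 ≤ D.lmpt - A.lmpt ∧ (0 < D.r - A.r → 0 < D.lmpt - A.lmpt) := by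
      intro D hD
      refine ⟨by linarith [h1 D hD], ?_⟩
      intro hy
      rcases h D hD with h' | ⟨h', h''⟩
      · linarith
      · linarith
    obtain ⟨c, hc0, hc1, hcd⟩ := exists_c X hX (fun D => D.lmpt - A.lmpt)
      (fun D => D.r - A.r) hxy
    set s := Real.sqrt (1 - c^2) with hs
    have hcs : c^2 + s^2 = 1 := by
      rw [hs, Real.sq_sqrt (by nlinarith)]
      ring
    have hm : ∀ D ∈ X, c * A.lmpt - A.r * (1 - c) ≤ c * D.u - D.r := by
      intro D hD
      have h2 := hcd D hD
      simp only [CC.lmpt] at h2 ⊢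
      nlinarith
    have h3 := key_ineq X C c s hcs _ hm hC
    simp only [CC.lmpt] at heq h3
    nlinarith [h3, heq, hc1]

lemma key_right (X : Set CC) (hX : X.Finite) (B C : CC)
    (h : ∀ D ∈ X, rendLe D B)
    (hC : C.pts ⊆ convexHull ℝ (⋃ D ∈ X, CC.pts D)) : rendLe C B := by
  have h1 : ∀ D ∈ X, D.rmpt ≤ B.rmpt := by
    intro D hD
    rcases h D hD with h' | ⟨h', _⟩
    · exact h'.le
    · exact h'.le
  have hm1 : ∀ D ∈ X, -B.rmpt ≤ (-1) * D.u - D.r := by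
    intro D hD
    have := h1 D hD
    simp only [CC.rmpt] at this ⊢
    linarith
  have step1 : C.rmpt ≤ B.rmpt := by
    have h2 := key_ineq X C (-1) 0 (by norm_num) (-B.rmpt) hm1 hC
    simp only [CC.rmpt] at h2 ⊢
    linarith
  rcases lt_or_eq_of_le step1 with hlt | heq
  · exact Or.inl hlt
  · refine Or.inr ⟨heq, ?_⟩
    have hxy : ∀ D ∈ X, 0 ≤ B.rmpt - D.rmpt ∧ (0 < D.r - B.r → 0 < B.rmpt - D.rmpt) := by
      intro D hD
      refine ⟨by linarith [h1 D hD], ?_⟩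
      intro hy
      rcases h D hD with h' | ⟨h', h''⟩
      · linarith
      · linarith
    obtain ⟨c, hc0, hc1, hcd⟩ := exists_c X hX (fun D => B.rmpt - D.rmpt)
      (fun D => D.r - B.r) hxy
    set s := Real.sqrt (1 - c^2) with hs
    have hcs : (-c)^2 + s^2 = 1 := by
      rw [hs, Real.sq_sqrt (by nlinarith)]
      ring
    have hm : ∀ D ∈ X, -(c * B.rmpt + B.r * (1 - c)) ≤ (-c) * D.u - D.r := by
      intro D hD
      have h2 := hcd D hD
      simp only [CC.rmpt] at h2 ⊢
      nlinarith
    have h3 := key_ineq X C (-c) s hcs _ hm hC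
    simp only [CC.rmpt] at heq h3
    nlinarith [h3, heq, hc1]

/-- STATEMENT 3 aux end -/
theorem stmt3 (F : Set CC) (hF : F.Finite) (A : CC) (hA : A ∈ F) (B : CC) (hB : B ∈ F) :
    ch F (hInt F A B) = hInt F A B := by
  have hXfin : (hInt F A B).Finite := hF.subset (fun D hD => hD.1)
  ext C
  constructor
  · rintro ⟨hCF, hCsub⟩
    exact ⟨hCF, key_left _ hXfin A C (fun D hD => hD.2.1) hCsub,
      key_right _ hXfin B C (fun D hD => hD.2.2) hCsub⟩
  · rintro ⟨hCF, hl, hr⟩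
    refine ⟨hCF, ?_⟩
    exact (Set.subset_biUnion_of_mem (u := CC.pts) (show C ∈ hInt F A B from ⟨hCF, hl, hr⟩)).trans
      (subset_convexHull ℝ _)
end

section
/- Let F be a finite concave set of collinear circles with closure operator ch. Then every nonempty closed set X of (F,ch) equals the horizontal interval [A,B], where A ∈ X has the least left end and B ∈ X has the greatest right end among circles of X. Consequently the lattice of closed sets equals {∅} ∪ {[A,B] : A,B ∈ F}. -/
open Filter Topology

namespace CC

lemma pts_nonempty (C : CC) : C.pts.Nonempty := ⟨(C.u + C.r, 0), by simp [CC.pts]⟩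

lemma support_le_of_mem_pts (C : CC) {a b c : ℝ} (hc : 0 ≤ c) (habc : a ^ 2 + b ^ 2 = c ^ 2)
    {p : ℝ × ℝ} (hp : p ∈ C.pts) : a * C.u - c * C.r ≤ a * p.1 + b * p.2 := by
  have hp : (p.1 - C.u) ^ 2 + p.2 ^ 2 = C.r ^ 2 := hp
  have cauchy_schwarz : (a * (p.1 - C.u) + b * p.2) ^ 2 ≤ (c * C.r) ^ 2 := by
    nlinarith [sq_nonneg (a * p.2 - b * (p.1 - C.u))]
  linarith [(abs_le_of_sq_le_sq' cauchy_schwarz (mul_nonneg hc C.hr)).1]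

lemma exists_mem_pts_support_eq (C : CC) {a b c : ℝ} (hc : 0 < c)
    (habc : a ^ 2 + b ^ 2 = c ^ 2) : ∃ p ∈ C.pts, a * p.1 + b * p.2 = a * C.u - c * C.r := by
  refine ⟨(C.u - a * C.r / c, -(b * C.r / c)), ?_, ?_⟩
  · change (C.u - a * C.r / c - C.u) ^ 2 + (-(b * C.r / c)) ^ 2 = C.r ^ 2
    field_simp
    linear_combination C.r ^ 2 * habc
  · field_simp
    linear_combination -C.r * habc

lemma support_le_of_pts_subset_convexHull {Y : Set CC} {C : CC} {a b c m : ℝ} (hc : 0 < c)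
    (habc : a ^ 2 + b ^ 2 = c ^ 2) (hY : ∀ D ∈ Y, m ≤ a * D.u - c * D.r)
    (hC : C.pts ⊆ convexHull ℝ (⋃ D ∈ Y, D.pts)) : m ≤ a * C.u - c * C.r := by
  have hlin : IsLinearMap ℝ fun p : ℝ × ℝ => a * p.1 + b * p.2 :=
    ⟨fun p q => by simp only [Prod.fst_add, Prod.snd_add]; ring,
     fun t p => by simp only [Prod.smul_fst, Prod.smul_snd, smul_eq_mul]; ring⟩
  have hull_sub : convexHull ℝ (⋃ D ∈ Y, D.pts) ⊆ {p | m ≤ a * p.1 + b * p.2} := by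
    refine convexHull_min ?_ (convex_halfSpace_ge hlin m)
    simp only [Set.iUnion_subset_iff]
    intro D hD p hp
    exact (hY D hD).trans (D.support_le_of_mem_pts hc.le habc hp)
  obtain ⟨p, hp, hval⟩ := C.exists_mem_pts_support_eq hc habc
  rw [← hval]
  exact hull_sub (hC hp)

end CC

lemma Prod.Lex.toLex_le_toLex_iff_eventually {a b c d : ℝ} :
    toLex (a, b) ≤ toLex (c, d) ↔ ∀ᶠ t in 𝓝[≠] (0 : ℝ), a + t ^ 2 * b ≤ c + t ^ 2 * d := by
  have hlim : Tendsto (fun t : ℝ => (c - a) + t ^ 2 * (d - b)) (𝓝 0) (𝓝 (c - a)) := by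
    simpa using ((continuous_pow 2).mul continuous_const).const_add (c - a) |>.tendsto 0
  rw [Prod.Lex.toLex_le_toLex]
  constructor
  · rintro (hac | ⟨rfl, hbd⟩)
    · refine nhdsWithin_le_nhds ((hlim.eventually (lt_mem_nhds (sub_pos.2 hac))).mono ?_)
      intro t ht
      linarith
    · exact Eventually.of_forall fun t => by gcongr
  · dsimp only
    intro h
    have hac : a ≤ c := sub_nonneg.1 <| ge_of_tendsto (hlim.mono_left nhdsWithin_le_nhds)
      (h.mono fun t ht => by linarith)
    refine hac.lt_or_eq.imp id fun hac => ⟨hac, ?_⟩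
    obtain ⟨t, ht, ht_ne⟩ := (h.and self_mem_nhdsWithin).exists
    subst hac
    exact le_of_mul_le_mul_left (by linarith) (sq_pos_of_ne_zero ht_ne)

lemma lendLe_iff_toLex_le {C D : CC} :
    lendLe C D ↔ toLex (C.lmpt, -C.rmpt) ≤ toLex (D.lmpt, -D.rmpt) := by
  simp only [lendLe, Prod.Lex.toLex_le_toLex, CC.lmpt, CC.rmpt]
  constructor <;> rintro (h | ⟨h, h'⟩) <;> first | exact .inl h | exact .inr ⟨h, by linarith⟩

lemma rendLe_iff_toLex_le {C D : CC} :
    rendLe C D ↔ toLex (C.rmpt, -C.lmpt) ≤ toLex (D.rmpt, -D.lmpt) := by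
  simp only [rendLe, Prod.Lex.toLex_le_toLex, CC.lmpt, CC.rmpt]
  constructor <;> rintro (h | ⟨h, h'⟩) <;> first | exact .inl h | exact .inr ⟨h, by linarith⟩

lemma lendLe_iff_eventually {C D : CC} :
    lendLe C D ↔ ∀ᶠ t in 𝓝[≠] (0 : ℝ),
      (1 - t ^ 2) * C.u - (1 + t ^ 2) * C.r ≤ (1 - t ^ 2) * D.u - (1 + t ^ 2) * D.r := by
  rw [lendLe_iff_toLex_le, Prod.Lex.toLex_le_toLex_iff_eventually]
  refine eventually_congr (Eventually.of_forall fun t => ?_)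
  simp only [CC.lmpt, CC.rmpt]
  constructor <;> intro h <;> linarith

lemma rendLe_iff_eventually {C D : CC} :
    rendLe C D ↔ ∀ᶠ t in 𝓝[≠] (0 : ℝ),
      -(1 - t ^ 2) * D.u - (1 + t ^ 2) * D.r ≤ -(1 - t ^ 2) * C.u - (1 + t ^ 2) * C.r := by
  rw [rendLe_iff_toLex_le, Prod.Lex.toLex_le_toLex_iff_eventually]
  refine eventually_congr (Eventually.of_forall fun t => ?_)
  simp only [CC.lmpt, CC.rmpt]
  constructor <;> intro h <;> linarith

lemma lendLe_of_pts_subset_convexHull {Y : Set CC} (hY : Y.Finite) {A C : CC}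
    (hA : ∀ D ∈ Y, lendLe A D) (hC : C.pts ⊆ convexHull ℝ (⋃ D ∈ Y, D.pts)) : lendLe A C := by
  simp only [lendLe_iff_eventually] at hA ⊢
  filter_upwards [(eventually_all_finite hY).2 hA] with t ht
  exact CC.support_le_of_pts_subset_convexHull (b := -2 * t) (by positivity) (by ring) ht hC

lemma rendLe_of_pts_subset_convexHull {Y : Set CC} (hY : Y.Finite) {B C : CC}
    (hB : ∀ D ∈ Y, rendLe D B) (hC : C.pts ⊆ convexHull ℝ (⋃ D ∈ Y, D.pts)) : rendLe C B := by
  simp only [rendLe_iff_eventually] at hB ⊢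
  filter_upwards [(eventually_all_finite hY).2 hB] with t ht
  exact CC.support_le_of_pts_subset_convexHull (b := -2 * t) (by positivity) (by ring) ht hC

lemma ch_empty (F : Set CC) : ch F ∅ = ∅ := by
  refine Set.eq_empty_of_forall_notMem fun C ⟨_, hC⟩ => ?_
  obtain ⟨p, hp⟩ := C.pts_nonempty
  simpa using hC hp

lemma ch_hInt {F : Set CC} (hF : F.Finite) (A B : CC) : ch F (hInt F A B) = hInt F A B := by
  have hfin : (hInt F A B).Finite := hF.subset fun D hD => hD.1
  refine Set.Subset.antisymm (fun C ⟨hCF, hC⟩ => ⟨hCF, ?_, ?_⟩) fun C hC => ⟨hC.1, ?_⟩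
  · exact lendLe_of_pts_subset_convexHull hfin (fun D hD => hD.2.1) hC
  · exact rendLe_of_pts_subset_convexHull hfin (fun D hD => hD.2.2) hC
  · exact (Set.subset_biUnion_of_mem (u := CC.pts) hC).trans (subset_convexHull ℝ _)

lemma eq_hInt_of_ch_eq {F X : Set CC} (hconc : ConcaveF F) (hXF : X ⊆ F) (hX : ch F X = X)
    {A B : CC} (hA : A ∈ X) (hAX : ∀ C ∈ X, lendLe A C) (hB : B ∈ X) (hBX : ∀ C ∈ X, rendLe C B) :
    X = hInt F A B := by
  refine Set.Subset.antisymm (fun C hC => ⟨hXF hC, hAX C hC, hBX C hC⟩) ?_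
  rintro C ⟨hCF, hAC, hCB⟩
  rw [← hX]
  refine ⟨hCF, (hconc A (hXF hA) C hCF B (hXF hB) hAC hCB).trans (convexHull_mono ?_)⟩
  exact Set.union_subset (Set.subset_biUnion_of_mem (u := CC.pts) hA)
    (Set.subset_biUnion_of_mem (u := CC.pts) hB)

lemma exists_forall_lendLe_of_finite {X : Set CC} (hX : X.Finite) (hne : X.Nonempty) :
    ∃ A ∈ X, ∀ C ∈ X, lendLe A C := by
  simpa only [lendLe_iff_toLex_le] using
    X.exists_min_image (fun C => toLex (C.lmpt, -C.rmpt)) hX hne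

lemma exists_forall_rendLe_of_finite {X : Set CC} (hX : X.Finite) (hne : X.Nonempty) :
    ∃ B ∈ X, ∀ C ∈ X, rendLe C B := by
  simpa only [rendLe_iff_toLex_le] using
    X.exists_max_image (fun C => toLex (C.rmpt, -C.lmpt)) hX hne

/-- For a finite concave set `F` of collinear circles, every nonempty
closed set `X` equals `[A,B]` where `A ∈ X` has least left end and `B ∈ X` has greatest
right end in `X`; consequently the closed sets are exactly `{∅} ∪ {[A,B] : A, B ∈ F}`. -/
theorem stmt4 (F : Set CC) (hF : F.Finite) (hconc : ConcaveF F) :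
    (∀ X : Set CC, X ⊆ F → ch F X = X → X.Nonempty →
      ∀ A ∈ X, (∀ C ∈ X, lendLe A C) → ∀ B ∈ X, (∀ C ∈ X, rendLe C B) →
        X = hInt F A B) ∧
    {X : Set CC | X ⊆ F ∧ ch F X = X} =
      insert (∅ : Set CC) {Y : Set CC | ∃ A ∈ F, ∃ B ∈ F, Y = hInt F A B} := by
  refine ⟨fun X hXF hX _ A hA hAX B hB hBX => eq_hInt_of_ch_eq hconc hXF hX hA hAX hB hBX, ?_⟩
  ext X
  simp only [Set.mem_ofPred_eq, Set.mem_insert_iff]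
  constructor
  · rintro ⟨hXF, hX⟩
    refine X.eq_empty_or_nonempty.imp id fun hne => ?_
    obtain ⟨A, hA, hAX⟩ := exists_forall_lendLe_of_finite (hF.subset hXF) hne
    obtain ⟨B, hB, hBX⟩ := exists_forall_rendLe_of_finite (hF.subset hXF) hne
    exact ⟨A, hXF hA, B, hXF hB, eq_hInt_of_ch_eq hconc hXF hX hA hAX hB hBX⟩
  · rintro (rfl | ⟨A, -, B, -, rfl⟩)
    · exact ⟨Set.empty_subset F, ch_empty F⟩
    · exact ⟨fun C hC => hC.1, ch_hInt hF A B⟩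
end

section
/- Let F be a finite nonempty concave set of collinear circles, and let K_l and K_r be the circles of F with least left end and greatest right end respectively. Then {∅} ∪ {[K_l,B] : B ∈ F} and {∅} ∪ {[A,K_r] : A ∈ F} are chains in the lattice of closed sets of (F,ch), and every nonempty closed set X satisfies X = [K_l,B] ∩ [A,K_r], where A,B ∈ X have least left end and greatest right end in X. -/

lemma lendLe_trans {C D E : CC} (h1 : lendLe C D) (h2 : lendLe D E) : lendLe C E := by
  unfold lendLe at *
  rcases h1 with h | ⟨h, h'⟩ <;> rcases h2 with g | ⟨g, g'⟩ <;>
    first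
      | (left; linarith)
      | (right; constructor <;> linarith)

lemma rendLe_trans {C D E : CC} (h1 : rendLe C D) (h2 : rendLe D E) : rendLe C E := by
  unfold rendLe at *
  rcases h1 with h | ⟨h, h'⟩ <;> rcases h2 with g | ⟨g, g'⟩ <;>
    first
      | (left; linarith)
      | (right; constructor <;> linarith)

lemma lendLe_total (C D : CC) : lendLe C D ∨ lendLe D C := by
  unfold lendLe
  rcases lt_trichotomy C.lmpt D.lmpt with h | h | h
  · exact Or.inl (Or.inl h)
  · rcases le_total C.r D.r with g | g
    · exact Or.inr (Or.inr ⟨h.symm, g⟩)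
    · exact Or.inl (Or.inr ⟨h, g⟩)
  · exact Or.inr (Or.inl h)

lemma rendLe_total (C D : CC) : rendLe C D ∨ rendLe D C := by
  unfold rendLe
  rcases lt_trichotomy C.rmpt D.rmpt with h | h | h
  · exact Or.inl (Or.inl h)
  · rcases le_total C.r D.r with g | g
    · exact Or.inl (Or.inr ⟨h, g⟩)
    · exact Or.inr (Or.inr ⟨h.symm, g⟩)
  · exact Or.inr (Or.inl h)

/-- For a finite nonempty concave set `F` of collinear circles with
`K_l ∈ F` of least left end and `K_r ∈ F` of greatest right end, the families
`{∅} ∪ {[K_l,B] : B ∈ F}` and `{∅} ∪ {[A,K_r] : A ∈ F}` are chains in the lattice of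
closed sets of `(F, ch)`, and every nonempty closed set `X` equals
`[K_l,B] ∩ [A,K_r]` where `A, B ∈ X` have least left end and greatest right end in `X`. -/
theorem stmt7 (F : Set CC) (hF : F.Finite) (hne : F.Nonempty) (hconc : ConcaveF F)
    (Kl : CC) (hKl : Kl ∈ F) (hKlmin : ∀ C ∈ F, lendLe Kl C)
    (Kr : CC) (hKr : Kr ∈ F) (hKrmax : ∀ C ∈ F, rendLe C Kr) :
    IsChain (· ⊆ ·) (insert (∅ : Set CC) {Y : Set CC | ∃ B ∈ F, Y = hInt F Kl B}) ∧
    IsChain (· ⊆ ·) (insert (∅ : Set CC) {Y : Set CC | ∃ A ∈ F, Y = hInt F A Kr}) ∧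
    (∀ X : Set CC, X ⊆ F → ch F X = X → X.Nonempty →
      ∀ A ∈ X, (∀ C ∈ X, lendLe A C) → ∀ B ∈ X, (∀ C ∈ X, rendLe C B) →
        X = hInt F Kl B ∩ hInt F A Kr) := by
  refine ⟨?_, ?_, ?_⟩
  · rintro Y (rfl | ⟨B, hB, rfl⟩) Z (rfl | ⟨B', hB', rfl⟩) hne'
    · exact absurd rfl hne'
    · exact Or.inl (Set.empty_subset _)
    · exact Or.inr (Set.empty_subset _)
    · rcases rendLe_total B B' with h | h
      · exact Or.inl fun C hC => ⟨hC.1, hC.2.1, rendLe_trans hC.2.2 h⟩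
      · exact Or.inr fun C hC => ⟨hC.1, hC.2.1, rendLe_trans hC.2.2 h⟩
  · rintro Y (rfl | ⟨A, hA, rfl⟩) Z (rfl | ⟨A', hA', rfl⟩) hne'
    · exact absurd rfl hne'
    · exact Or.inl (Set.empty_subset _)
    · exact Or.inr (Set.empty_subset _)
    · rcases lendLe_total A A' with h | h
      · exact Or.inr fun C hC => ⟨hC.1, lendLe_trans h hC.2.1, hC.2.2⟩
      · exact Or.inl fun C hC => ⟨hC.1, lendLe_trans h hC.2.1, hC.2.2⟩
  · intro X hXF hcl hXne A hA hAmin B hB hBmax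
    ext C
    constructor
    · intro hC
      exact ⟨⟨hXF hC, hKlmin C (hXF hC), hBmax C hC⟩,
        ⟨hXF hC, hAmin C hC, hKrmax C (hXF hC)⟩⟩
    · rintro ⟨⟨hCF, _, hCB⟩, ⟨_, hAC, _⟩⟩
      have hconv : C.pts ⊆ convexHull ℝ (A.pts ∪ B.pts) :=
        hconc A (hXF hA) C hCF B (hXF hB) hAC hCB
      have hsub : A.pts ∪ B.pts ⊆ ⋃ D ∈ X, CC.pts D := by
        rintro p (hp | hp)
        · exact Set.mem_biUnion hA hp
        · exact Set.mem_biUnion hB hp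
      have : C ∈ ch F X :=
        ⟨hCF, hconv.trans (convexHull_mono hsub)⟩
      rwa [hcl] at this
end

section
/- A finite lattice L is meet-distributive with width(M(L)) ≤ 2 if and only if L is lower semimodular and dually slim (i.e., width(M(L)) ≤ 2, where M(L) is the set of meet-irreducible elements). -/
/-!
Distinct lower covers `m ≠ m'` of `u` satisfy `m ⊔ m' = u`, so choosing for each lower cover `c`
a meet-irreducible element above `c` but not above `u` yields an antichain in `M(L)`; dual slimness
thus leaves every element with at most two lower covers. When `u` has two lower covers `a, b`,
lower semimodularity makes `a ⊓ b` a lower cover of both, so `[u_*, u] = {a ⊓ b, a, b, a ⊔ b}` is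
distributive. Conversely, distributivity of `[u_*, u]` shows that two lower covers `a, e` of `u`
satisfy `a ⊓ e ⋖ e`; given `a ⋖ a ⊔ b`, pick a lower cover `e ≥ b` of `a ⊔ b` and apply induction
inside `e` to `a ⊓ e ⋖ (a ⊓ e) ⊔ b = e`.
-/

/-- A finite lattice is meet-distributive if for every `u ≠ ⊥` the interval
`[u_*, u]` is distributive, where `u_*` is the meet of the lower covers of `u`. -/
def MeetDistributive (L : Type*) [Lattice L] [OrderBot L] : Prop :=
  ∀ u : L, u ≠ ⊥ → ∀ s : L, IsGLB {a : L | a ⋖ u} s →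
    ∀ x ∈ Set.Icc s u, ∀ y ∈ Set.Icc s u, ∀ z ∈ Set.Icc s u,
      x ⊓ (y ⊔ z) = (x ⊓ y) ⊔ (x ⊓ z)

/-- Lower semimodularity: `a ⋖ a ⊔ b` implies `a ⊓ b ⋖ b`. -/
def LowerSemimodular (L : Type*) [Lattice L] : Prop :=
  ∀ a b : L, a ⋖ a ⊔ b → a ⊓ b ⋖ b

/-- The set `M(L)` of meet-irreducible elements has width at most 2. -/
def DuallySlim (L : Type*) [Lattice L] : Prop :=
  ∀ A : Finset L, (∀ a ∈ A, InfIrred a) → IsAntichain (· ≤ ·) (↑A : Set L) →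
    A.card ≤ 2

section

variable {L : Type*} [Lattice L]

theorem CovBy.sup_eq_of_not_le {a u w : L} (hau : a ⋖ u) (hwu : w ≤ u) (hwa : ¬ w ≤ a) :
    a ⊔ w = u :=
  (hau.eq_or_eq le_sup_left (sup_le hau.le hwu)).resolve_left fun h => hwa (h ▸ le_sup_right)

theorem inf_sup_left_of_mem_inf_sup_quad {a b x y z : L}
    (hx : x ∈ ({a ⊓ b, a, b, a ⊔ b} : Set L)) (hy : y ∈ ({a ⊓ b, a, b, a ⊔ b} : Set L))
    (hz : z ∈ ({a ⊓ b, a, b, a ⊔ b} : Set L)) :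
    x ⊓ (y ⊔ z) = x ⊓ y ⊔ x ⊓ z := by
  refine le_antisymm ?_ le_inf_sup
  simp only [Set.mem_insert_iff, Set.mem_singleton_iff] at hx hy hz
  rcases hx with rfl | rfl | rfl | rfl <;> rcases hy with rfl | rfl | rfl | rfl <;>
    rcases hz with rfl | rfl | rfl | rfl <;> simp

theorem Set.Finite.exists_isGLB {s : Set L} (hs : s.Finite) (hne : s.Nonempty) :
    ∃ g, IsGLB s g :=
  ⟨_, by simpa using Finset.isGLB_inf' (hs.toFinset_nonempty.2 hne)⟩

theorem infIrred_of_maximal_not_le {u m : L} (hm : Maximal (fun x => ¬ u ≤ x) m) :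
    InfIrred m := by
  refine ⟨fun hmax => hm.prop (le_sup_right.trans (hmax le_sup_left)), fun b c hbc => ?_⟩
  by_contra! hne
  have above_u : ∀ {x}, m ≤ x → x ≠ m → u ≤ x := fun hmx hxm =>
    not_not.1 fun hux => hxm (hm.eq_of_ge hux hmx)
  exact hm.prop (hbc ▸ le_inf (above_u (hbc ▸ inf_le_left) hne.1)
    (above_u (hbc ▸ inf_le_right) hne.2))

theorem exists_infIrred_le_not_le [Finite L] {u a : L} (hua : ¬ u ≤ a) :
    ∃ m, a ≤ m ∧ ¬ u ≤ m ∧ InfIrred m :=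
  let ⟨m, ham, hm⟩ := Finite.exists_le_maximal (p := fun x => ¬ u ≤ x) hua
  ⟨m, ham, hm.prop, infIrred_of_maximal_not_le hm⟩

theorem DuallySlim.ncard_le_two [Finite L] {A : Set L} (hDS : DuallySlim L)
    (hA : ∀ a ∈ A, InfIrred a) (hanti : IsAntichain (· ≤ ·) A) : A.ncard ≤ 2 := by
  rw [Set.ncard_eq_toFinset_card A]
  exact hDS _ (by simpa using hA) (by simpa using hanti)

theorem DuallySlim.ncard_covBy_le_two [Finite L] (hDS : DuallySlim L) (u : L) :
    {c | c ⋖ u}.ncard ≤ 2 := by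
  have : Nonempty L := ⟨u⟩
  choose! m hcm hum hm using fun c (hc : c ⋖ u) => exists_infIrred_le_not_le hc.lt.not_ge
  have hinj : ∀ c ∈ {c | c ⋖ u}, ∀ d ∈ {c | c ⋖ u}, m c ≤ m d → c = d := by
    intro c hc d hd hle
    by_contra hne
    exact hum d hd ((hc.wcovBy.sup_eq hd.wcovBy hne) ▸ sup_le ((hcm c hc).trans hle) (hcm d hd))
  rw [← Set.InjOn.ncard_image fun c hc d hd h => hinj c hc d hd h.le]
  refine hDS.ncard_le_two (Set.forall_mem_image.2 hm) ?_
  rintro _ ⟨c, hc, rfl⟩ _ ⟨d, hd, rfl⟩ hne hle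
  exact hne (congrArg m (hinj c hc d hd hle))

theorem LowerSemimodular.Icc_inf_subset [Finite L] (hLS : LowerSemimodular L) {a b u : L}
    (hcov : {c | c ⋖ u} = {a, b}) (hab : a ≠ b) :
    Set.Icc (a ⊓ b) u ⊆ {a ⊓ b, a, b, a ⊔ b} := by
  have hcov' : ∀ c, c ⋖ u ↔ c = a ∨ c = b := fun c => Set.ext_iff.1 hcov c
  have hau := (hcov' a).2 (.inl rfl)
  have hbu := (hcov' b).2 (.inr rfl)
  have hu : a ⊔ b = u := hau.wcovBy.sup_eq hbu.wcovBy hab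
  have hcova : a ⊓ b ⋖ a := inf_comm b a ▸ hLS b a (by rwa [sup_comm, hu])
  have hcovb : a ⊓ b ⋖ b := hLS a b (by rwa [hu])
  rintro w ⟨hw, hwu⟩
  obtain rfl | hwu := hwu.eq_or_lt
  · simp [hu]
  obtain ⟨c, hwc, hcu⟩ := exists_le_covBy_of_lt hwu
  rcases (hcov' c).1 hcu with rfl | rfl
  · rcases hcova.eq_or_eq hw hwc with rfl | rfl <;> simp
  · rcases hcovb.eq_or_eq hw hwc with rfl | rfl <;> simp

theorem LowerSemimodular.meetDistributive [Finite L] [OrderBot L] (hLS : LowerSemimodular L)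
    (hDS : DuallySlim L) : MeetDistributive L := by
  intro u hu s hs
  suffices ∃ a b, Set.Icc s u ⊆ {a ⊓ b, a, b, a ⊔ b} by
    obtain ⟨a, b, hsub⟩ := this
    exact fun x hx y hy z hz => inf_sup_left_of_mem_inf_sup_quad (hsub hx) (hsub hy) (hsub hz)
  obtain ⟨c, -, hc⟩ := exists_le_covBy_of_lt (bot_lt_iff_ne_bot.2 hu)
  have hpos : 0 < {c | c ⋖ u}.ncard := (Set.ncard_pos).2 ⟨c, hc⟩
  obtain h | h : {c | c ⋖ u}.ncard = 1 ∨ {c | c ⋖ u}.ncard = 2 := by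
    have := hDS.ncard_covBy_le_two u
    omega
  · obtain ⟨a, hcov⟩ := Set.ncard_eq_one.1 h
    have hau : a ⋖ u := (Set.ext_iff.1 hcov a).2 rfl
    rw [hcov] at hs
    rw [hs.unique isGLB_singleton]
    exact ⟨a, u, fun w hw => by rcases hau.eq_or_eq hw.1 hw.2 with rfl | rfl <;> simp⟩
  · obtain ⟨a, b, hab, hcov⟩ := Set.ncard_eq_two.1 h
    rw [hcov] at hs
    exact ⟨a, b, hs.unique isGLB_pair ▸ hLS.Icc_inf_subset hcov hab⟩

theorem MeetDistributive.inf_covBy_of_covBy [Finite L] [OrderBot L] (hMD : MeetDistributive L)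
    {a e u : L} (hau : a ⋖ u) (heu : e ⋖ u) (hea : ¬ e ≤ a) : a ⊓ e ⋖ e := by
  obtain ⟨s, hs⟩ := (Set.toFinite {c | c ⋖ u}).exists_isGLB ⟨a, hau⟩
  refine ⟨inf_lt_right.2 hea, fun w haw hwe => hwe.ne' ?_⟩
  have hwa : ¬ w ≤ a := fun h => haw.not_ge (le_inf h hwe.le)
  have hw : w ∈ Set.Icc s u := ⟨(le_inf (hs.1 hau) (hs.1 heu)).trans haw.le, hwe.le.trans heu.le⟩
  calc e = e ⊓ (a ⊔ w) := by rw [hau.sup_eq_of_not_le hw.2 hwa, inf_eq_left.2 heu.le]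
    _ = e ⊓ a ⊔ e ⊓ w :=
      hMD u hau.lt.ne_bot s hs e ⟨hs.1 heu, heu.le⟩ a ⟨hs.1 hau, hau.le⟩ w hw
    _ = w := by rw [inf_comm, inf_eq_right.2 hwe.le, sup_eq_right.2 haw.le]

theorem MeetDistributive.lowerSemimodular [Finite L] [OrderBot L] (hMD : MeetDistributive L) :
    LowerSemimodular L := by
  suffices h : ∀ u a b : L, a ⋖ u → a ⊔ b = u → a ⊓ b ⋖ b from fun a b hab => h _ a b hab rfl
  intro u
  induction u using WellFoundedLT.induction with
  | _ u ih =>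
  intro a b hau hab
  have hba : ¬ b ≤ a := fun h => hau.lt.ne' (hab.symm.trans (sup_eq_left.2 h))
  obtain rfl | hbu := (hab ▸ le_sup_right : b ≤ u).eq_or_lt
  · rwa [inf_eq_left.2 hau.le]
  obtain ⟨e, hbe, heu⟩ := exists_le_covBy_of_lt hbu
  have hcov := hMD.inf_covBy_of_covBy hau heu fun hea => hba (hbe.trans hea)
  have hsup : a ⊓ e ⊔ b = e := hcov.sup_eq_of_not_le hbe fun h => hba (h.trans inf_le_left)
  simpa only [inf_assoc, inf_eq_right.2 hbe] using ih e heu.lt (a ⊓ e) b hcov hsup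

end

/-- A finite lattice `L` is meet-distributive with `width(M(L)) ≤ 2`
if and only if `L` is lower semimodular and dually slim. -/
theorem stmt9 {L : Type*} [Lattice L] [Fintype L] [OrderBot L] :
    (MeetDistributive L ∧ DuallySlim L) ↔ (LowerSemimodular L ∧ DuallySlim L) :=
  ⟨fun ⟨hMD, hDS⟩ => ⟨hMD.lowerSemimodular, hDS⟩,
    fun ⟨hLS, hDS⟩ => ⟨hLS.meetDistributive hDS, hDS⟩⟩
end

section
/- Let L₁ and L₂ be finite lattices satisfying Carathéodory's condition C(n), and let φ: J(L₁) → J(L₂) be a bijection between their sets of join-irreducible elements such that for all a, b₁,…,b_n ∈ J(L₁), a ≤ b₁∨⋯∨b_n if and only if φ(a) ≤ φ(b₁)∨⋯∨φ(b_n). Then φ extends to a lattice isomorphism from L₁ onto L₂. -/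
/-- Carathéodory's condition `C(n)`: whenever a join-irreducible `a` lies below the
join of join-irreducibles `b₁, …, b_k`, it lies below the join of at most `n` of them. -/
def CaratheodoryC (n : ℕ) (L : Type*) [Lattice L] [OrderBot L] : Prop :=
  ∀ a : L, SupIrred a → ∀ k : ℕ, ∀ b : Fin k → L, (∀ i, SupIrred (b i)) →
    a ≤ Finset.univ.sup b → ∃ s : Finset (Fin k), s.card ≤ n ∧ a ≤ s.sup b

/-- Padding lemma: a nonempty finset of size ≤ n can be enumerated by `Fin n`. -/
lemma pad_lemma {L : Type*} [Lattice L] [OrderBot L] {t : Finset L} (ht : t.Nonempty)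
    {n : ℕ} (hcard : t.card ≤ n) :
    ∃ c : Fin n → L, (∀ i, c i ∈ t) ∧ Finset.univ.sup c = t.sup id := by
  obtain ⟨d, hd⟩ := ht
  refine ⟨fun i => if h : (i : ℕ) < t.card then (t.equivFin.symm ⟨i, h⟩ : L) else d, ?_, ?_⟩
  · intro i
    dsimp only
    split
    · exact (t.equivFin.symm _).2
    · exact hd
  · apply le_antisymm
    · apply Finset.sup_le
      intro i _
      split
      · exact Finset.le_sup (f := id) (t.equivFin.symm _).2
      · exact Finset.le_sup (f := id) hd
    · apply Finset.sup_le
      intro x hx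
      set j := t.equivFin ⟨x, hx⟩ with hj
      have hjn : (j : ℕ) < n := lt_of_lt_of_le j.2 hcard
      set c : Fin n → L := fun i => if h : (i : ℕ) < t.card then (t.equivFin.symm ⟨i, h⟩ : L) else d with hc
      have hx2 : x ≤ c ⟨j, hjn⟩ := by
        simp only [hc, j.2, dif_pos]
        have he : (⟨(j : ℕ), j.2⟩ : Fin t.card) = j := by ext; rfl
        rw [he, hj, Equiv.symm_apply_apply]
      exact hx2.trans (Finset.le_sup (f := c) (Finset.mem_univ _))

/-- If `L₁, L₂` are finite lattices satisfying `C(n)` and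
`φ : J(L₁) → J(L₂)` is a bijection such that `a ≤ b₁ ∨ ⋯ ∨ b_n` iff
`φ(a) ≤ φ(b₁) ∨ ⋯ ∨ φ(b_n)` for all `a, b₁, …, b_n ∈ J(L₁)`, then `φ` extends to a
lattice isomorphism `L₁ ≅ L₂`. -/
theorem stmt10 {L₁ L₂ : Type*} [Lattice L₁] [Fintype L₁] [OrderBot L₁]
    [Lattice L₂] [Fintype L₂] [OrderBot L₂] (n : ℕ)
    (hC₁ : CaratheodoryC n L₁) (hC₂ : CaratheodoryC n L₂)
    (φ : L₁ → L₂) (hbij : Set.BijOn φ {a : L₁ | SupIrred a} {a : L₂ | SupIrred a})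
    (hφ : ∀ a : L₁, SupIrred a → ∀ b : Fin n → L₁, (∀ i, SupIrred (b i)) →
      (a ≤ Finset.univ.sup b ↔ φ a ≤ Finset.univ.sup (φ ∘ b))) :
    ∃ ψ : L₁ ≃o L₂, ∀ a : L₁, SupIrred a → ψ a = φ a := by
  classical
  -- key transfer lemma
  have key : ∀ (a : L₁), SupIrred a → ∀ S : Finset L₁, (∀ x ∈ S, SupIrred x) →
      (a ≤ S.sup id ↔ φ a ≤ (S.image φ).sup id) := by
    intro a ha S hS
    constructor
    · intro hle
      -- use C(n) in L₁
      have hb : ∀ i : Fin S.card, SupIrred ((S.equivFin.symm i : L₁)) :=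
        fun i => hS _ (S.equivFin.symm i).2
      have hsup : Finset.univ.sup (fun i : Fin S.card => (S.equivFin.symm i : L₁)) = S.sup id := by
        apply le_antisymm
        · exact Finset.sup_le fun i _ => Finset.le_sup (f := id) (S.equivFin.symm i).2
        · exact Finset.sup_le fun x hx => by
            simpa using Finset.le_sup (f := fun i : Fin S.card => (S.equivFin.symm i : L₁))
              (Finset.mem_univ (S.equivFin ⟨x, hx⟩))
      obtain ⟨s, hsn, hs⟩ := hC₁ a ha S.card _ hb (hsup ▸ hle)
      -- t = image of s in L₁
      set t : Finset L₁ := s.image (fun i => (S.equivFin.symm i : L₁)) with ht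
      have htS : t ⊆ S := by
        intro x hx
        simp only [ht, Finset.mem_image] at hx
        obtain ⟨i, _, rfl⟩ := hx
        exact (S.equivFin.symm i).2
      have hts : a ≤ t.sup id := by
        refine hs.trans ?_
        exact Finset.sup_le fun i hi => Finset.le_sup (f := id) (Finset.mem_image_of_mem _ hi)
      have htcard : t.card ≤ n := le_trans (Finset.card_image_le) hsn
      have htne : t.Nonempty := by
        rcases Finset.eq_empty_or_nonempty t with h | h
        · exfalso
          rw [h] at hts
          simp only [Finset.sup_empty] at hts
          exact ha.1 (fun x _ => hts.trans bot_le)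
        · exact h
      obtain ⟨c, hc1, hc2⟩ := pad_lemma htne htcard
      have hcirr : ∀ i, SupIrred (c i) := fun i => hS _ (htS (hc1 i))
      have := (hφ a ha c hcirr).mp (hc2 ▸ hts)
      refine this.trans ?_
      apply Finset.sup_le
      intro i _
      exact Finset.le_sup (f := id) (Finset.mem_image_of_mem φ (htS (hc1 i)))
    · intro hle
      have haφ : SupIrred (φ a) := hbij.mapsTo ha
      set T : Finset L₂ := S.image φ with hT
      have hTirr : ∀ y ∈ T, SupIrred y := by
        intro y hy
        simp only [hT, Finset.mem_image] at hy
        obtain ⟨x, hx, rfl⟩ := hy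
        exact hbij.mapsTo (hS x hx)
      have hb : ∀ i : Fin T.card, SupIrred ((T.equivFin.symm i : L₂)) :=
        fun i => hTirr _ (T.equivFin.symm i).2
      have hsup : Finset.univ.sup (fun i : Fin T.card => (T.equivFin.symm i : L₂)) = T.sup id := by
        apply le_antisymm
        · exact Finset.sup_le fun i _ => Finset.le_sup (f := id) (T.equivFin.symm i).2
        · exact Finset.sup_le fun x hx => by
            simpa using Finset.le_sup (f := fun i : Fin T.card => (T.equivFin.symm i : L₂))
              (Finset.mem_univ (T.equivFin ⟨x, hx⟩))
      obtain ⟨s, hsn, hs⟩ := hC₂ (φ a) haφ T.card _ hb (hsup ▸ hle)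
      set t : Finset L₂ := s.image (fun i => (T.equivFin.symm i : L₂)) with htdef
      have htT : t ⊆ T := by
        intro x hx
        simp only [htdef, Finset.mem_image] at hx
        obtain ⟨i, _, rfl⟩ := hx
        exact (T.equivFin.symm i).2
      have hts : φ a ≤ t.sup id := by
        refine hs.trans ?_
        exact Finset.sup_le fun i hi => Finset.le_sup (f := id) (Finset.mem_image_of_mem _ hi)
      have htcard : t.card ≤ n := le_trans (Finset.card_image_le) hsn
      have htne : t.Nonempty := by
        rcases Finset.eq_empty_or_nonempty t with h | h
        · exfalso
          rw [h] at hts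
          simp only [Finset.sup_empty] at hts
          exact haφ.1 (fun x _ => hts.trans bot_le)
        · exact h
      obtain ⟨c, hc1, hc2⟩ := pad_lemma htne htcard
      -- pull back c to L₁
      have hcpre : ∀ i : Fin n, ∃ d : L₁, d ∈ S ∧ φ d = c i := by
        intro i
        have := htT (hc1 i)
        simp only [hT, Finset.mem_image] at this
        exact this
      choose d hd1 hd2 using hcpre
      have hdirr : ∀ i, SupIrred (d i) := fun i => hS _ (hd1 i)
      have hcomp : φ ∘ d = c := funext fun i => hd2 i
      have : a ≤ Finset.univ.sup d := by
        rw [hφ a ha d hdirr, hcomp, hc2]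
        exact hts
      refine this.trans ?_
      exact Finset.sup_le fun i _ => Finset.le_sup (f := id) (hd1 i)
  -- F x : the join-irreducibles below x
  let F : L₁ → Finset L₁ := fun x => Finset.univ.filter (fun a => SupIrred a ∧ a ≤ x)
  have hF_irr : ∀ x, ∀ a ∈ F x, SupIrred a := by
    intro x a haF
    simp only [F, Finset.mem_filter] at haF
    exact haF.2.1
  have hF_le : ∀ x, ∀ a ∈ F x, a ≤ x := by
    intro x a haF
    simp only [F, Finset.mem_filter] at haF
    exact haF.2.2
  have hdecomp : ∀ x : L₁, (F x).sup id = x := by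
    intro x
    apply le_antisymm
    · exact Finset.sup_le fun a ha => hF_le x a ha
    · obtain ⟨s, hs, hsirr⟩ := exists_supIrred_decomposition x
      rw [← hs]
      refine Finset.sup_mono ?_
      intro a haS
      simp only [F, Finset.mem_filter, Finset.mem_univ, true_and]
      exact ⟨hsirr haS, hs ▸ Finset.le_sup (f := id) haS⟩
  -- similarly for L₂
  let G : L₂ → Finset L₂ := fun y => Finset.univ.filter (fun a => SupIrred a ∧ a ≤ y)
  have hG_irr : ∀ y, ∀ a ∈ G y, SupIrred a := by
    intro y a haG
    simp only [G, Finset.mem_filter] at haG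
    exact haG.2.1
  have hG_le : ∀ y, ∀ a ∈ G y, a ≤ y := by
    intro y a haG
    simp only [G, Finset.mem_filter] at haG
    exact haG.2.2
  have hGdecomp : ∀ y : L₂, (G y).sup id = y := by
    intro y
    apply le_antisymm
    · exact Finset.sup_le fun a ha => hG_le y a ha
    · obtain ⟨s, hs, hsirr⟩ := exists_supIrred_decomposition y
      rw [← hs]
      refine Finset.sup_mono ?_
      intro a haS
      simp only [G, Finset.mem_filter, Finset.mem_univ, true_and]
      exact ⟨hsirr haS, hs ▸ Finset.le_sup (f := id) haS⟩
  -- define ψ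
  let ψ : L₁ → L₂ := fun x => ((F x).image φ).sup id
  -- membership in G (ψ x) vs F x
  have hψ_le_iff : ∀ x y : L₁, ψ x ≤ ψ y ↔ x ≤ y := by
    intro x y
    constructor
    · intro h
      conv_lhs => rw [← hdecomp x]
      apply Finset.sup_le
      intro a haF
      have ha := hF_irr x a haF
      have h1 : φ a ≤ ψ x := Finset.le_sup (f := id) (Finset.mem_image_of_mem φ haF)
      have h2 : φ a ≤ ((F y).image φ).sup id := h1.trans h
      have := (key a ha (F y) (hF_irr y)).mpr h2
      rw [hdecomp y] at this
      exact this
    · intro h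
      apply Finset.sup_le
      intro b hb
      simp only [Finset.mem_image] at hb
      obtain ⟨a, haF, rfl⟩ := hb
      have : a ∈ F y := by
        simp only [F, Finset.mem_filter, Finset.mem_univ, true_and]
        exact ⟨hF_irr x a haF, (hF_le x a haF).trans h⟩
      exact Finset.le_sup (f := id) (Finset.mem_image_of_mem φ this)
  have hψ_surj : Function.Surjective ψ := by
    intro y
    -- preimage of G y
    have hGy : ∀ c ∈ G y, ∃ a : L₁, SupIrred a ∧ φ a = c := by
      intro c hc
      obtain ⟨a, ha, rfl⟩ := hbij.surjOn (hG_irr y c hc)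
      exact ⟨a, ha, rfl⟩
    choose pre hpre1 hpre2 using hGy
    set Sy : Finset L₁ := (G y).attach.image (fun c => pre c.1 c.2) with hSy
    have hSy_irr : ∀ a ∈ Sy, SupIrred a := by
      intro a ha
      simp only [hSy, Finset.mem_image, Finset.mem_attach, true_and] at ha
      obtain ⟨c, rfl⟩ := ha
      exact hpre1 _ _
    have hSy_img : Sy.image φ = G y := by
      apply Finset.Subset.antisymm
      · intro b hb
        simp only [Finset.mem_image, hSy, Finset.mem_attach, true_and] at hb
        obtain ⟨a, ⟨c, rfl⟩, rfl⟩ := hb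
        rw [hpre2]
        exact c.2
      · intro c hc
        refine Finset.mem_image.mpr ⟨pre c hc, ?_, hpre2 c hc⟩
        exact Finset.mem_image.mpr ⟨⟨c, hc⟩, Finset.mem_attach _ _, rfl⟩
    refine ⟨Sy.sup id, ?_⟩
    have hx := hdecomp (Sy.sup id)
    apply le_antisymm
    · -- ψ (Sy.sup id) ≤ y
      apply Finset.sup_le
      intro b hb
      simp only [Finset.mem_image] at hb
      obtain ⟨a, haF, rfl⟩ := hb
      have ha := hF_irr _ a haF
      have hax : a ≤ Sy.sup id := hF_le _ a haF
      have := (key a ha Sy hSy_irr).mp hax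
      rw [hSy_img] at this
      exact this.trans (le_of_eq (hGdecomp y))
    · -- y ≤ ψ (Sy.sup id)
      rw [← hGdecomp y, ← hSy_img]
      apply Finset.sup_le
      intro b hb
      simp only [Finset.mem_image] at hb
      obtain ⟨a, haS, rfl⟩ := hb
      have haF : a ∈ F (Sy.sup id) := by
        simp only [F, Finset.mem_filter, Finset.mem_univ, true_and]
        exact ⟨hSy_irr a haS, Finset.le_sup (f := id) haS⟩
      exact Finset.le_sup (f := id) (Finset.mem_image_of_mem φ haF)
  have hψ_inj : Function.Injective ψ := by
    intro x y h
    exact le_antisymm ((hψ_le_iff x y).mp h.le) ((hψ_le_iff y x).mp h.ge)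
  refine ⟨⟨Equiv.ofBijective ψ ⟨hψ_inj, hψ_surj⟩, ?_⟩, ?_⟩
  · intro x y
    exact hψ_le_iff x y
  · intro a ha
    show ψ a = φ a
    apply le_antisymm
    · apply Finset.sup_le
      intro b hb
      simp only [Finset.mem_image] at hb
      obtain ⟨c, hcF, rfl⟩ := hb
      have hc := hF_irr a c hcF
      have hca : c ≤ a := hF_le a c hcF
      have : c ≤ ({a} : Finset L₁).sup id := by simpa using hca
      have := (key c hc {a} (by simpa using ha)).mp this
      simpa using this
    · have haF : a ∈ F a := by
        simp only [F, Finset.mem_filter, Finset.mem_univ, true_and]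
        exact ⟨ha, le_refl a⟩
      exact Finset.le_sup (f := id) (Finset.mem_image_of_mem φ haF)
end

section
/- Let L₁ and L₂ be finite lattices and φ: J(L₁) → J(L₂) a bijection such that for all a ∈ J(L₁) and B ⊆ J(L₁), a ≤ ⋁B if and only if φ(a) ≤ ⋁φ(B). Then φ extends to a lattice isomorphism L₁ ≅ L₂. -/
/-- If `L₁, L₂` are finite lattices and `φ : J(L₁) → J(L₂)` is a
bijection such that for every `a ∈ J(L₁)` and `B ⊆ J(L₁)` one has `a ≤ ⋁B` iff
`φ(a) ≤ ⋁φ(B)` (with `⋁∅ = ⊥`), then `φ` extends to a lattice isomorphism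
`L₁ ≅ L₂`. -/
theorem stmt11 {L₁ L₂ : Type*} [Lattice L₁] [Fintype L₁] [OrderBot L₁]
    [Lattice L₂] [Fintype L₂] [OrderBot L₂]
    (φ : L₁ → L₂) (hbij : Set.BijOn φ {a : L₁ | SupIrred a} {a : L₂ | SupIrred a})
    (hφ : ∀ a : L₁, SupIrred a → ∀ B : Finset L₁, (∀ b ∈ B, SupIrred b) →
      (a ≤ B.sup id ↔ φ a ≤ B.sup φ)) :
    ∃ ψ : L₁ ≃o L₂, ∀ a : L₁, SupIrred a → ψ a = φ a := by
  classical
  -- B x : the sup-irreducibles below x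
  set B : L₁ → Finset L₁ := fun x => Finset.univ.filter (fun a => SupIrred a ∧ a ≤ x) with hB
  have hBirr : ∀ x, ∀ b ∈ B x, SupIrred b := by
    intro x b hb
    simp only [hB, Finset.mem_filter] at hb
    exact hb.2.1
  have hBsup : ∀ x : L₁, (B x).sup id = x := by
    intro x
    apply le_antisymm
    · exact Finset.sup_le fun b hb => by
        simp only [hB, Finset.mem_filter] at hb; exact hb.2.2
    · obtain ⟨s, hs, hirr⟩ := exists_supIrred_decomposition x
      calc x = s.sup id := hs.symm
        _ ≤ (B x).sup id := Finset.sup_mono (by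
            intro b hb
            simp only [hB, Finset.mem_filter]
            exact ⟨Finset.mem_univ _, hirr hb, hs ▸ Finset.le_sup (f := id) hb⟩)
  set ψ : L₁ → L₂ := fun x => (B x).sup φ with hψ
  -- key: for supirred a, a ≤ x ↔ φ a ≤ ψ x
  have key : ∀ a : L₁, SupIrred a → ∀ x : L₁, (a ≤ x ↔ φ a ≤ ψ x) := by
    intro a ha x
    have := hφ a ha (B x) (hBirr x)
    rwa [hBsup x] at this
  have hmono : ∀ x y : L₁, x ≤ y → ψ x ≤ ψ y := by
    intro x y hxy
    exact Finset.sup_mono (by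
      intro b hb
      simp only [hB, Finset.mem_filter] at hb ⊢
      exact ⟨hb.1, hb.2.1, hb.2.2.trans hxy⟩)
  have hrefl : ∀ x y : L₁, ψ x ≤ ψ y ↔ x ≤ y := by
    intro x y
    constructor
    · intro h
      rw [← hBsup x]
      apply Finset.sup_le
      intro b hb
      have hb' := hb
      simp only [hB, Finset.mem_filter] at hb'
      have : φ b ≤ ψ x := Finset.le_sup hb
      exact (key b hb'.2.1 y).2 (this.trans h)
    · exact hmono x y
  have hinj : Function.Injective ψ := fun x y h =>
    le_antisymm ((hrefl x y).1 h.le) ((hrefl y x).1 h.ge)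
  -- surjectivity
  have hsurj : Function.Surjective ψ := by
    intro y
    obtain ⟨s, hs, hirr⟩ := exists_supIrred_decomposition y
    -- pull back s through φ
    have hpull : ∀ c ∈ s, ∃ a : L₁, SupIrred a ∧ φ a = c := by
      intro c hc
      obtain ⟨a, ha, hac⟩ := hbij.2.2 (hirr hc)
      exact ⟨a, ha, hac⟩
    choose f hf1 hf2 using hpull
    set A : Finset L₁ := s.attach.image (fun c => f c.1 c.2) with hA
    refine ⟨A.sup id, ?_⟩
    apply le_antisymm
    · -- ψ (A.sup id) ≤ y
      apply Finset.sup_le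
      intro b hb
      simp only [hB, Finset.mem_filter] at hb
      have hb2 : φ b ≤ A.sup φ := (hφ b hb.2.1 A (by
        intro a ha
        simp only [hA, Finset.mem_image, Finset.mem_attach, true_and] at ha
        obtain ⟨⟨c, hc⟩, rfl⟩ := ha
        exact hf1 c hc)).1 hb.2.2
      refine hb2.trans ?_
      apply Finset.sup_le
      intro a ha
      simp only [hA, Finset.mem_image, Finset.mem_attach, true_and] at ha
      obtain ⟨⟨c, hc⟩, rfl⟩ := ha
      rw [hf2 c hc, ← hs]
      exact Finset.le_sup (f := id) hc
    · -- y ≤ ψ (A.sup id)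
      rw [← hs]
      apply Finset.sup_le
      intro c hc
      have : f c hc ≤ A.sup id := Finset.le_sup (f := id) (by
        simp only [hA, Finset.mem_image, Finset.mem_attach, true_and]
        exact ⟨⟨c, hc⟩, rfl⟩)
      have h2 := (key (f c hc) (hf1 c hc) (A.sup id)).1 this
      simpa [hf2 c hc] using h2
  refine ⟨⟨Equiv.ofBijective ψ ⟨hinj, hsurj⟩, ?_⟩, ?_⟩
  · intro x y; exact hrefl x y
  · intro a ha
    show ψ a = φ a
    apply le_antisymm
    · apply Finset.sup_le
      intro b hb
      simp only [hB, Finset.mem_filter] at hb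
      have := hφ b hb.2.1 {a} (by simpa using ha)
      simp only [Finset.sup_singleton, id] at this
      exact this.1 hb.2.2
    · exact Finset.le_sup (by simp [hB, ha])
end

section
/- Let L be a finite lower semimodular lattice, a a join-irreducible element of L, and b, c ∈ L with c < a and a ≤ b ∨ c. Then a ≤ b. -/
/-- In a finite lower semimodular lattice, if `a` is join-irreducible,
`c < a`, and `a ≤ b ⊔ c`, then `a ≤ b`. -/
theorem stmt14 {L : Type*} [Lattice L] [Fintype L]
    (hlsm : ∀ x y : L, x ⋖ x ⊔ y → x ⊓ y ⋖ y)
    (a b c : L) (ha : SupIrred a) (hc : c < a) (hle : a ≤ b ⊔ c) :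
    a ≤ b := by
  by_contra hab
  have hbc : b ⊔ c = b ⊔ a := le_antisymm (sup_le_sup_left hc.le b)
    (sup_le le_sup_left hle)
  have hblt : b < b ⊔ a := lt_of_le_of_ne le_sup_left
    (fun h => hab (h ▸ le_sup_right))
  obtain ⟨t, hbt, htcov⟩ := exists_le_covBy_of_lt hblt
  have hta : t ⊔ a = b ⊔ a := le_antisymm (sup_le htcov.lt.le le_sup_right)
    (sup_le (hbt.trans le_sup_left) le_sup_right)
  have htcov' : t ⋖ t ⊔ a := by rwa [hta]
  have hmeet : t ⊓ a ⋖ a := hlsm t a htcov'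
  have hcta : c ≤ t ⊓ a := by
    by_contra hcta
    have h1 : c ⊔ (t ⊓ a) ≤ a := sup_le hc.le inf_le_right
    have h2 : t ⊓ a < c ⊔ (t ⊓ a) := lt_of_le_of_ne le_sup_right
      (fun h => hcta (h ▸ le_sup_left))
    have h3 : c ⊔ (t ⊓ a) = a := by
      rcases h1.lt_or_eq with h | h
      · exact absurd h (hmeet.2 h2)
      · exact h
    rcases ha.2 h3 with h | h
    · exact hc.ne h
    · exact hmeet.lt.ne h
  have hat : a ≤ t := hle.trans (hbc ▸ (sup_le hbt (hcta.trans inf_le_left) : b ⊔ c ≤ t))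
  exact hmeet.lt.ne (le_antisymm inf_le_right (le_inf hat le_rfl))
end

section
/- Every finite, dually slim lattice satisfies Carathéodory's condition C(2): whenever a, b₁,…,b_k are join-irreducible elements with a ≤ b₁∨⋯∨b_k, there are i,j with a ≤ b_i ∨ b_j. -/
private lemma aux_le_of_infIrred {L : Type*} [Lattice L] [Finite L] (a : L) :
    ∀ x : L, (∀ m : L, InfIrred m → x ≤ m → a ≤ m) → a ≤ x := by
  intro x
  induction x using WellFoundedGT.induction with
  | _ x ih =>
    intro H
    by_cases hmax : IsMax x
    · exact le_sup_right.trans (hmax le_sup_left)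
    by_cases hx : InfIrred x
    · exact H x hx le_rfl
    · have h2 : ¬ ∀ ⦃y z : L⦄, y ⊓ z = x → y = x ∨ z = x := fun h => hx ⟨hmax, h⟩
      push_neg at h2
      obtain ⟨y, z, hyz, hy, hz⟩ := h2
      have hxy : x ≤ y := hyz ▸ inf_le_left
      have hxz : x ≤ z := hyz ▸ inf_le_right
      have hay : a ≤ y := ih y (lt_of_le_of_ne hxy (Ne.symm hy))
        (fun m hm hle => H m hm (hxy.trans hle))
      have haz : a ≤ z := ih z (lt_of_le_of_ne hxz (Ne.symm hz))
        (fun m hm hle => H m hm (hxz.trans hle))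
      exact hyz ▸ le_inf hay haz



/-- Every finite, dually slim lattice (the set of meet-irreducible
elements has width at most 2) satisfies Carathéodory's condition `C(2)`: whenever
`a, b₁, …, b_k` are join-irreducible and `a ≤ b₁ ⊔ ⋯ ⊔ b_k`, there are indices `i, j`
with `a ≤ b_i ⊔ b_j`. -/
theorem stmt16 {L : Type*} [Lattice L] [Fintype L] [OrderBot L]
    (hslim : ∀ A : Finset L, (∀ a ∈ A, InfIrred a) →
      IsAntichain (· ≤ ·) (↑A : Set L) → A.card ≤ 2) :
    ∀ a : L, SupIrred a → ∀ k : ℕ, ∀ b : Fin k → L, (∀ i, SupIrred (b i)) →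
      a ≤ Finset.univ.sup b → ∃ i j : Fin k, a ≤ b i ⊔ b j := by
  intro a ha k b hb hle
  classical
  -- take a minimal J with a ≤ J.sup b
  set S : Finset (Finset (Fin k)) :=
    Finset.univ.filter (fun J : Finset (Fin k) => a ≤ J.sup b) with hS
  have hSne : S.Nonempty := ⟨Finset.univ, by simp [hS, hle]⟩
  obtain ⟨J, hJS, hJmin⟩ := S.exists_min_image Finset.card hSne
  have hJle : a ≤ J.sup b := by simpa [hS] using hJS
  have hmin : ∀ J' : Finset (Fin k), a ≤ J'.sup b → J.card ≤ J'.card := by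
    intro J' h
    exact hJmin J' (by simp [hS, h])
  -- key: for each i ∈ J, a goes above the sup of the rest fails
  have key : ∀ i ∈ J, ∃ m : L, InfIrred m ∧ (∀ j ∈ J, j ≠ i → b j ≤ m) ∧
      ¬ b i ≤ m ∧ ¬ a ≤ m := by
    intro i hi
    have hna : ¬ a ≤ (J.erase i).sup b := by
      intro h
      have := hmin _ h
      have hlt : (J.erase i).card < J.card := Finset.card_erase_lt_of_mem hi
      omega
    have : ¬ ∀ m : L, InfIrred m → (J.erase i).sup b ≤ m → a ≤ m := by
      intro h; exact hna (aux_le_of_infIrred a _ h)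
    push_neg at this
    obtain ⟨m, hm, hsm, ham⟩ := this
    refine ⟨m, hm, fun j hj hji => le_trans (Finset.le_sup (Finset.mem_erase.2 ⟨hji, hj⟩)) hsm,
      ?_, ham⟩
    intro hbm
    apply ham
    calc a ≤ J.sup b := hJle
    _ = b i ⊔ (J.erase i).sup b := by
        conv_lhs => rw [← Finset.insert_erase hi]
        rw [Finset.sup_insert]
    _ ≤ m := sup_le hbm hsm
  -- case on the cardinality of J
  rcases Nat.lt_or_ge J.card 3 with hcard | hcard
  · interval_cases h : J.card
    · -- card 0 : a ≤ ⊥, contradiction with SupIrred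
      exfalso
      rw [Finset.card_eq_zero] at h
      have : a = ⊥ := le_bot_iff.1 (by simpa [h] using hJle)
      exact ha.1 (this ▸ isMin_bot)
    · obtain ⟨i, hi⟩ := Finset.card_eq_one.1 h
      exact ⟨i, i, by simpa [hi] using hJle⟩
    · obtain ⟨i, j, hij, hJ⟩ := Finset.card_eq_two.1 h
      exact ⟨i, j, by simpa [hJ] using hJle⟩
  · exfalso
    obtain ⟨T, hTJ, hT3⟩ := Finset.exists_subset_card_eq hcard
    obtain ⟨i₁, i₂, i₃, h12, h13, h23, hT⟩ := Finset.card_eq_three.1 hT3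
    have hi₁ : i₁ ∈ J := hTJ (by simp [hT])
    have hi₂ : i₂ ∈ J := hTJ (by simp [hT])
    have hi₃ : i₃ ∈ J := hTJ (by simp [hT])
    obtain ⟨m₁, hm₁, hup₁, hnb₁, _⟩ := key i₁ hi₁
    obtain ⟨m₂, hm₂, hup₂, hnb₂, _⟩ := key i₂ hi₂
    obtain ⟨m₃, hm₃, hup₃, hnb₃, _⟩ := key i₃ hi₃
    -- pairwise not ≤
    have nle : ∀ i i' : Fin k, i ∈ J → i' ∈ J → i ≠ i' →
        ∀ m m' : L, (∀ j ∈ J, j ≠ i → b j ≤ m) → ¬ b i' ≤ m' → ¬ m ≤ m' := by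
      intro i i' hi hi' hne m m' hup hnb hmm
      exact hnb ((hup i' hi' (Ne.symm hne)).trans hmm)
    have n12 : ¬ m₁ ≤ m₂ := nle i₁ i₂ hi₁ hi₂ h12 m₁ m₂ hup₁ hnb₂
    have n21 : ¬ m₂ ≤ m₁ := nle i₂ i₁ hi₂ hi₁ (Ne.symm h12) m₂ m₁ hup₂ hnb₁
    have n13 : ¬ m₁ ≤ m₃ := nle i₁ i₃ hi₁ hi₃ h13 m₁ m₃ hup₁ hnb₃
    have n31 : ¬ m₃ ≤ m₁ := nle i₃ i₁ hi₃ hi₁ (Ne.symm h13) m₃ m₁ hup₃ hnb₁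
    have n23 : ¬ m₂ ≤ m₃ := nle i₂ i₃ hi₂ hi₃ h23 m₂ m₃ hup₂ hnb₃
    have n32 : ¬ m₃ ≤ m₂ := nle i₃ i₂ hi₃ hi₂ (Ne.symm h23) m₃ m₂ hup₃ hnb₂
    have d12 : m₁ ≠ m₂ := fun h => n12 (h ▸ le_rfl)
    have d13 : m₁ ≠ m₃ := fun h => n13 (h ▸ le_rfl)
    have d23 : m₂ ≠ m₃ := fun h => n23 (h ▸ le_rfl)
    have hA := hslim {m₁, m₂, m₃}
      (by intro x hx; simp only [Finset.mem_insert, Finset.mem_singleton] at hx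
          rcases hx with rfl | rfl | rfl <;> assumption)
      (by intro x hx y hy hxy
          simp only [Finset.coe_insert, Finset.coe_singleton, Set.mem_insert_iff,
            Set.mem_singleton_iff] at hx hy
          rcases hx with rfl | rfl | rfl <;> rcases hy with rfl | rfl | rfl <;>
            first | exact absurd rfl hxy | assumption)
    rw [Finset.card_insert_of_notMem (by simp [d12, d13]),
      Finset.card_insert_of_notMem (by simp [d23]), Finset.card_singleton] at hA
    omega
end

section
/- Let F be a finite set of collinear circles in the plane. Then the convex geometry (F, ch) satisfies Carathéodory's condition C(2): if C, D₁,…,D_k ∈ F with C ⊆ conv(D₁ ∪ ⋯ ∪ D_k), then there exist i,j ∈ {1,…,k} with C ⊆ conv(D_i ∪ D_j). -/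
/-! ### Auxiliary lemmas -/

lemma cauchy2 (a b x y r : ℝ) (hr : 0 ≤ r) (h : x^2 + y^2 = r^2) :
    a*x + b*y ≤ Real.sqrt (a^2+b^2) * r := by
  have hs : (0:ℝ) ≤ a^2+b^2 := by positivity
  have h2 := Real.sq_sqrt hs
  have h0 := Real.sqrt_nonneg (a^2+b^2)
  nlinarith [sq_nonneg (a*y - b*x), sq_nonneg (Real.sqrt (a^2+b^2)*r - (a*x+b*y)),
    mul_nonneg h0 hr]

lemma affine_nonneg {α β : ℝ} {a t b : ℝ} (hat : a ≤ t) (htb : t ≤ b)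
    (ha : 0 ≤ α*a+β) (hb : 0 ≤ α*b+β) : 0 ≤ α*t+β := by
  rcases eq_or_lt_of_le (hat.trans htb) with h | h
  · have ht : t = a := le_antisymm (h ▸ htb) hat
    rw [ht]; exact ha
  · have key : (b-a)*(α*t+β) = (b-t)*(α*a+β) + (t-a)*(α*b+β) := by ring
    nlinarith [mul_nonneg (sub_nonneg.2 htb) ha, mul_nonneg (sub_nonneg.2 hat) hb]

/-- The 1-dimensional Carathéodory-type lemma for affine functions on `[-1,1]`. -/
lemma oneD {k : ℕ} (α β : Fin k → ℝ)
    (h : ∀ t ∈ Set.Icc (-1:ℝ) 1, ∃ i, 0 ≤ α i * t + β i) :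
    ∃ i j, ∀ t ∈ Set.Icc (-1:ℝ) 1, 0 ≤ α i * t + β i ∨ 0 ≤ α j * t + β j := by
  classical
  set S : Fin k → Set ℝ := fun i => {t | t ∈ Set.Icc (-1:ℝ) 1 ∧ 0 ≤ α i * t + β i} with hS
  have hScpt : ∀ i, IsCompact (S i) := by
    intro i
    have heq : S i = Set.Icc (-1:ℝ) 1 ∩ {t | 0 ≤ α i * t + β i} := rfl
    rw [heq]
    exact isCompact_Icc.inter_right (isClosed_le continuous_const (by fun_prop))
  set LF : Finset (Fin k) := Finset.univ.filter (fun i => 0 ≤ α i * (-1) + β i) with hLF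
  set RF : Finset (Fin k) := Finset.univ.filter (fun i => 0 ≤ α i * 1 + β i) with hRF
  have hLne : LF.Nonempty := by
    obtain ⟨i, hi⟩ := h (-1) (by norm_num)
    exact ⟨i, by rw [hLF, Finset.mem_filter]; exact ⟨Finset.mem_univ _, hi⟩⟩
  have hRne : RF.Nonempty := by
    obtain ⟨i, hi⟩ := h 1 (by norm_num)
    exact ⟨i, by rw [hRF, Finset.mem_filter]; exact ⟨Finset.mem_univ _, hi⟩⟩
  obtain ⟨i₀, hi₀L, hi₀max⟩ := LF.exists_max_image (fun i => sSup (S i)) hLne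
  obtain ⟨j₀, hj₀R, hj₀min⟩ := RF.exists_min_image (fun i => sInf (S i)) hRne
  have hi₀mem : 0 ≤ α i₀ * (-1) + β i₀ := by
    have := hi₀L; rw [hLF, Finset.mem_filter] at this; exact this.2
  have hj₀mem : 0 ≤ α j₀ * 1 + β j₀ := by
    have := hj₀R; rw [hRF, Finset.mem_filter] at this; exact this.2
  have hm1S : (-1:ℝ) ∈ S i₀ := ⟨by norm_num, hi₀mem⟩
  have h1S : (1:ℝ) ∈ S j₀ := ⟨by norm_num, hj₀mem⟩
  set e := sSup (S i₀) with he
  set s := sInf (S j₀) with hs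
  have he_mem : e ∈ S i₀ := (hScpt i₀).sSup_mem ⟨-1, hm1S⟩
  have hs_mem : s ∈ S j₀ := (hScpt j₀).sInf_mem ⟨1, h1S⟩
  by_cases hcase : s ≤ e
  · refine ⟨i₀, j₀, ?_⟩
    intro t ht
    rcases le_or_gt t e with h1 | h1
    · left
      exact affine_nonneg ht.1 h1 hi₀mem he_mem.2
    · right
      exact affine_nonneg (hcase.trans h1.le) ht.2 hs_mem.2 hj₀mem
  · exfalso
    push_neg at hcase
    set t := (e + s)/2 with htdef
    have hte : e < t := by simp [htdef]; linarith
    have hts : t < s := by simp [htdef]; linarith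
    have htI : t ∈ Set.Icc (-1:ℝ) 1 :=
      ⟨by have := he_mem.1.1; linarith, by have := hs_mem.1.2; linarith⟩
    obtain ⟨m, hm⟩ := h t htI
    by_cases hmL : 0 ≤ α m * (-1) + β m
    · have hmLF : m ∈ LF := by rw [hLF, Finset.mem_filter]; exact ⟨Finset.mem_univ _, hmL⟩
      have h1 : t ≤ sSup (S m) := le_csSup (hScpt m).bddAbove ⟨htI, hm⟩
      have h2 := hi₀max m hmLF
      linarith
    · push_neg at hmL
      have hm1 : 0 ≤ α m * 1 + β m := by
        by_contra hc
        push_neg at hc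
        have key : 2*(α m * t + β m) = (1 - t)*(α m * (-1) + β m) + (t + 1)*(α m * 1 + β m) := by
          ring
        have hA : (1-t)*(α m * (-1) + β m) ≤ 0 :=
          mul_nonpos_of_nonneg_of_nonpos (by linarith [htI.2]) hmL.le
        have hB : (t+1)*(α m * 1 + β m) < 0 :=
          mul_neg_of_pos_of_neg (by linarith [htI.1, hte, he_mem.1.1]) hc
        nlinarith
      have hmRF : m ∈ RF := by rw [hRF, Finset.mem_filter]; exact ⟨Finset.mem_univ _, hm1⟩
      have h1 : sInf (S m) ≤ t := csInf_le (hScpt m).bddBelow ⟨htI, hm⟩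
      have h2 := hj₀min m hmRF
      linarith

/-! ### Geometry of collinear circles -/

/-- The closed disk bounded by a collinear circle. -/
def CC.disk (C : CC) : Set (ℝ × ℝ) := {p : ℝ × ℝ | (p.1 - C.u) ^ 2 + p.2 ^ 2 ≤ C.r ^ 2}

lemma CC.pts_nonempty_s17 (C : CC) : C.pts.Nonempty :=
  ⟨(C.u + C.r, 0), by show (C.u + C.r - C.u)^2 + (0:ℝ)^2 = C.r^2; ring⟩

lemma CC.convex_disk (C : CC) : Convex ℝ C.disk := by
  intro p hp q hq a b ha hb hab
  have hp' : (p.1 - C.u)^2 + p.2^2 ≤ C.r^2 := hp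
  have hq' : (q.1 - C.u)^2 + q.2^2 ≤ C.r^2 := hq
  have hb' : b = 1 - a := by linarith
  subst hb'
  show ((a • p + (1-a) • q).1 - C.u)^2 + (a • p + (1-a) • q).2^2 ≤ C.r^2
  have h1 : (a • p + (1-a) • q).1 = a * p.1 + (1-a) * q.1 := rfl
  have h2 : (a • p + (1-a) • q).2 = a * p.2 + (1-a) * q.2 := rfl
  rw [h1, h2]
  nlinarith [mul_nonneg (mul_nonneg ha hb) (sq_nonneg (p.1 - q.1)),
    mul_nonneg (mul_nonneg ha hb) (sq_nonneg (p.2 - q.2)),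
    mul_le_mul_of_nonneg_left hp' ha, mul_le_mul_of_nonneg_left hq' hb]

/-- The convex hull of a circle is the closed disk. -/
lemma CC.convexHull_pts (C : CC) : convexHull ℝ C.pts = C.disk := by
  apply le_antisymm
  · exact convexHull_min (fun p hp => le_of_eq hp) C.convex_disk
  · intro p hp
    have hp' : (p.1 - C.u)^2 + p.2^2 ≤ C.r^2 := hp
    set h := Real.sqrt (C.r^2 - (p.1 - C.u)^2) with hh
    have hh0 : 0 ≤ h := Real.sqrt_nonneg _
    have hh2 : h^2 = C.r^2 - (p.1 - C.u)^2 := Real.sq_sqrt (by nlinarith [sq_nonneg p.2])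
    have hq1 : ((p.1, h) : ℝ × ℝ) ∈ C.pts := by
      show (p.1 - C.u)^2 + h^2 = C.r^2; rw [hh2]; ring
    have hq2 : ((p.1, -h) : ℝ × ℝ) ∈ C.pts := by
      show (p.1 - C.u)^2 + (-h)^2 = C.r^2; rw [neg_sq, hh2]; ring
    have hp2 : p.2^2 ≤ h^2 := by rw [hh2]; linarith
    rcases eq_or_lt_of_le hh0 with h0 | h0
    · have : p.2 = 0 := by nlinarith
      have : p = (p.1, -h) := by
        ext
        · rfl
        · show p.2 = -h; rw [this, ← h0]; ring
      rw [this]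
      exact subset_convexHull ℝ _ hq2
    · have hb1 : -h ≤ p.2 := by nlinarith
      have hb2 : p.2 ≤ h := by nlinarith
      have hseg : p ∈ segment ℝ ((p.1, -h) : ℝ × ℝ) ((p.1, h) : ℝ × ℝ) := by
        refine ⟨(h - p.2)/(2*h), (h + p.2)/(2*h), div_nonneg (by linarith) (by linarith),
          div_nonneg (by linarith) (by linarith), ?_, ?_⟩
        · field_simp; ring
        · ext
          · show (h - p.2)/(2*h) * p.1 + (h + p.2)/(2*h) * p.1 = p.1
            field_simp; ring
          · show (h - p.2)/(2*h) * (-h) + (h + p.2)/(2*h) * h = p.2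
            field_simp; ring
      exact (convex_convexHull ℝ C.pts).segment_subset
        (subset_convexHull ℝ _ hq2) (subset_convexHull ℝ _ hq1) hseg

lemma CC.isCompact_disk (C : CC) : IsCompact C.disk := by
  apply Metric.isCompact_of_isClosed_isBounded
  · exact isClosed_le (by fun_prop) continuous_const
  · apply Bornology.IsBounded.subset
      (Metric.isBounded_closedBall (x := ((C.u, 0) : ℝ × ℝ)) (r := C.r))
    intro p hp
    have hp' : (p.1 - C.u)^2 + p.2^2 ≤ C.r^2 := hp
    have h1 : |p.1 - C.u| ≤ C.r := by
      nlinarith [sq_abs (p.1 - C.u), abs_nonneg (p.1 - C.u), sq_nonneg p.2, C.hr]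
    have h2 : |p.2| ≤ C.r := by
      nlinarith [sq_abs p.2, abs_nonneg p.2, sq_nonneg (p.1 - C.u), C.hr]
    simp only [Metric.mem_closedBall, Prod.dist_eq, dist, sup_le_iff]
    constructor
    · simpa [Real.dist_eq] using h1
    · simpa [Real.dist_eq] using h2

lemma isCompact_convexJoin {s t : Set (ℝ × ℝ)} (hs : IsCompact s) (ht : IsCompact t) :
    IsCompact (convexJoin ℝ s t) := by
  have heq : convexJoin ℝ s t =
      (fun q : ℝ × (ℝ × ℝ) × (ℝ × ℝ) => (1 - q.1) • q.2.1 + q.1 • q.2.2) ''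
        (Set.Icc (0:ℝ) 1 ×ˢ s ×ˢ t) := by
    ext p
    rw [mem_convexJoin]
    constructor
    · rintro ⟨x, hx, y, hy, hseg⟩
      rw [segment_eq_image] at hseg
      obtain ⟨θ, hθ, hθp⟩ := hseg
      exact ⟨(θ, x, y), ⟨hθ, hx, hy⟩, hθp⟩
    · rintro ⟨⟨θ, x, y⟩, ⟨hθ, hx, hy⟩, hp⟩
      refine ⟨x, hx, y, hy, ?_⟩
      rw [segment_eq_image]
      exact ⟨θ, hθ, hp⟩
  rw [heq]
  exact ((isCompact_Icc.prod (hs.prod ht)).image (by fun_prop))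

lemma isCompact_hull_two (A B : CC) : IsCompact (convexHull ℝ (A.pts ∪ B.pts)) := by
  rw [convexHull_union A.pts_nonempty_s17 B.pts_nonempty_s17, A.convexHull_pts, B.convexHull_pts]
  exact isCompact_convexJoin A.isCompact_disk B.isCompact_disk

/-- Step B: if the support inequality holds for the pair `(A,B)` on all directions,
then the circle `C` is contained in the convex hull of `A ∪ B`. -/
lemma stepB (C A B : CC)
    (hAB : ∀ t ∈ Set.Icc (-1:ℝ) 1,
      C.u * t + C.r ≤ A.u * t + A.r ∨ C.u * t + C.r ≤ B.u * t + B.r) :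
    C.pts ⊆ convexHull ℝ (A.pts ∪ B.pts) := by
  intro p hp
  by_contra hnp
  set K := convexHull ℝ (A.pts ∪ B.pts) with hK
  have hKconv : Convex ℝ K := convex_convexHull ℝ _
  have hKclosed : IsClosed K := (isCompact_hull_two A B).isClosed
  obtain ⟨f, c, hfc, hcp⟩ := geometric_hahn_banach_closed_point hKconv hKclosed hnp
  set a := f (1, 0) with ha
  set b := f (0, 1) with hb
  have hf : ∀ q : ℝ × ℝ, f q = a * q.1 + b * q.2 := by
    intro q
    have hq : q = q.1 • ((1:ℝ), (0:ℝ)) + q.2 • ((0:ℝ), (1:ℝ)) := by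
      simp [Prod.ext_iff]
    conv_lhs => rw [hq]
    rw [map_add, map_smul, map_smul, smul_eq_mul, smul_eq_mul, ← ha, ← hb]
    ring
  clear_value a b
  clear ha hb
  set s := Real.sqrt (a^2 + b^2) with hs
  have hs2 : s^2 = a^2 + b^2 := Real.sq_sqrt (by positivity)
  have hs0 : 0 ≤ s := Real.sqrt_nonneg _
  have hp' : (p.1 - C.u)^2 + p.2^2 = C.r^2 := hp
  have hfp : f p ≤ a * C.u + s * C.r := by
    rw [hf]
    have := cauchy2 a b (p.1 - C.u) p.2 C.r C.hr hp'
    rw [← hs] at this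
    nlinarith [this]
  have hsupp : ∀ W : CC, W.pts ⊆ A.pts ∪ B.pts → a * W.u + s * W.r < c := by
    intro W hW
    rcases eq_or_lt_of_le hs0 with h0 | h0
    · have ha0 : a = 0 := by nlinarith [sq_nonneg a, sq_nonneg b]
      have hq : (W.u + W.r, (0:ℝ)) ∈ W.pts := by
        show (W.u + W.r - W.u)^2 + (0:ℝ)^2 = W.r^2; ring
      have hlt := hfc _ (subset_convexHull ℝ _ (hW hq))
      rw [hf] at hlt
      rw [ha0, ← h0]
      simp only [ha0, zero_mul, mul_zero, zero_add] at hlt ⊢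
      linarith [hlt]
    · set q : ℝ × ℝ := (W.u + W.r * a / s, W.r * b / s) with hq
      have hqW : q ∈ W.pts := by
        show (W.u + W.r * a / s - W.u)^2 + (W.r * b / s)^2 = W.r^2
        have hsne : s ≠ 0 := ne_of_gt h0
        have e1 : (W.u + W.r * a / s - W.u)^2 + (W.r * b / s)^2
            = W.r^2 * (a^2 + b^2) / s^2 := by
          field_simp
          try ring
        rw [e1, ← hs2]
        field_simp
      have hlt := hfc _ (subset_convexHull ℝ _ (hW hqW))
      rw [hf] at hlt
      have heq : a * q.1 + b * q.2 = a * W.u + s * W.r := by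
        show a * (W.u + W.r * a / s) + b * (W.r * b / s) = a * W.u + s * W.r
        have hsne : s ≠ 0 := ne_of_gt h0
        have e2 : a * (W.u + W.r * a / s) + b * (W.r * b / s)
            = a * W.u + W.r * (a^2 + b^2) / s := by
          field_simp
          try ring
        rw [e2, ← hs2]
        field_simp
        try ring
      rw [heq] at hlt
      exact hlt
  rcases eq_or_lt_of_le hs0 with h0 | h0
  · have ha0 : a = 0 := by nlinarith [sq_nonneg a, sq_nonneg b]
    have h1 := hsupp A Set.subset_union_left
    rw [ha0, ← h0] at h1 hfp
    simp only [zero_mul, add_zero, zero_add, mul_zero] at h1 hfp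
    linarith [hcp]
  · have ht : a / s ∈ Set.Icc (-1:ℝ) 1 := by
      constructor
      · rw [le_div_iff₀ h0]; nlinarith [sq_nonneg b]
      · rw [div_le_one h0]; nlinarith [sq_nonneg b]
    have hmul : ∀ W : CC, C.u * (a/s) + C.r ≤ W.u * (a/s) + W.r →
        a * C.u + s * C.r ≤ a * W.u + s * W.r := by
      intro W hW
      have e1 : a * C.u + s * C.r = s * (C.u * (a/s) + C.r) := by
        field_simp
      have e2 : a * W.u + s * W.r = s * (W.u * (a/s) + W.r) := by
        field_simp
      rw [e1, e2]
      exact mul_le_mul_of_nonneg_left hW hs0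
    rcases hAB (a/s) ht with hc1 | hc1
    · linarith [hsupp A Set.subset_union_left, hmul A hc1, hfp, hcp]
    · linarith [hsupp B Set.subset_union_right, hmul B hc1, hfp, hcp]

/-- If `F` is a finite set of collinear circles, then `(F, ch)`
satisfies Carathéodory's condition `C(2)`: if `C, D₁, …, D_k ∈ F` and
`C ⊆ conv(D₁ ∪ ⋯ ∪ D_k)`, then `C ⊆ conv(D_i ∪ D_j)` for some `i, j`. -/
theorem stmt17 (F : Set CC) (hF : F.Finite)
    (C : CC) (hC : C ∈ F) (k : ℕ) (D : Fin k → CC) (hD : ∀ i, D i ∈ F)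
    (h : C.pts ⊆ convexHull ℝ (⋃ i, (D i).pts)) :
    ∃ i j : Fin k, C.pts ⊆ convexHull ℝ ((D i).pts ∪ (D j).pts) := by
  -- k ≥ 1
  have hp0 : (C.u + C.r, (0:ℝ)) ∈ C.pts := by
    show (C.u + C.r - C.u)^2 + (0:ℝ)^2 = C.r^2; ring
  have hpmem := h hp0
  have hk : Nonempty (Fin k) := by
    rcases isEmpty_or_nonempty (Fin k) with he | hn
    · exfalso
      rw [Set.iUnion_of_empty, convexHull_empty] at hpmem
      exact hpmem
    · exact hn
  -- Step F: the support inequality in every direction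
  have hF2 : ∀ t ∈ Set.Icc (-1:ℝ) 1, ∃ i, C.u * t + C.r ≤ (D i).u * t + (D i).r := by
    intro t ht
    set b := Real.sqrt (1 - t^2) with hbdef
    have hb0 : 0 ≤ b := Real.sqrt_nonneg _
    have hb2 : t^2 + b^2 = 1 := by
      rw [hbdef, Real.sq_sqrt (by nlinarith [ht.1, ht.2])]; ring
    set p : ℝ × ℝ := (C.u + C.r * t, C.r * b) with hpdef
    have hpC : p ∈ C.pts := by
      show (C.u + C.r * t - C.u)^2 + (C.r * b)^2 = C.r^2
      linear_combination C.r^2 * hb2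
    have hpK := h hpC
    have hne : (Finset.univ : Finset (Fin k)).Nonempty := Finset.univ_nonempty
    set M := Finset.univ.sup' hne (fun i => (D i).u * t + (D i).r) with hM
    have hsub : convexHull ℝ (⋃ i, (D i).pts) ⊆ {q : ℝ × ℝ | t * q.1 + b * q.2 ≤ M} := by
      apply convexHull_min
      · intro q hq
        rw [Set.mem_iUnion] at hq
        obtain ⟨i, hqi⟩ := hq
        have hqi' : (q.1 - (D i).u)^2 + q.2^2 = (D i).r^2 := hqi
        have hcs := cauchy2 t b (q.1 - (D i).u) q.2 (D i).r (D i).hr hqi'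
        have hs1 : Real.sqrt (t^2 + b^2) = 1 := by rw [hb2]; exact Real.sqrt_one
        rw [hs1, one_mul] at hcs
        have hle : (D i).u * t + (D i).r ≤ M := by
          rw [hM]
          exact Finset.le_sup' (fun i => (D i).u * t + (D i).r) (Finset.mem_univ i)
        show t * q.1 + b * q.2 ≤ M
        nlinarith [hcs]
      · exact convex_halfSpace_le (by
          constructor
          · intro x y
            show t * (x + y).1 + b * (x + y).2 = _
            simp [Prod.fst_add, Prod.snd_add]; ring
          · intro c x
            show t * (c • x).1 + b * (c • x).2 = c * (t * x.1 + b * x.2)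
            simp [Prod.smul_fst, Prod.smul_snd, smul_eq_mul]; ring) M
    have hpM := hsub hpK
    have hval : t * p.1 + b * p.2 = C.u * t + C.r := by
      show t * (C.u + C.r * t) + b * (C.r * b) = C.u * t + C.r
      linear_combination C.r * hb2
    obtain ⟨i, _, hiM⟩ := Finset.exists_mem_eq_sup' hne (fun i => (D i).u * t + (D i).r)
    refine ⟨i, ?_⟩
    have : t * p.1 + b * p.2 ≤ M := hpM
    rw [hval] at this
    rw [hM] at this
    rw [hiM] at this
    exact this
  -- combine
  obtain ⟨i, j, hij⟩ := oneD (fun i => (D i).u - C.u) (fun i => (D i).r - C.r) (by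
    intro t ht
    obtain ⟨i, hi⟩ := hF2 t ht
    exact ⟨i, show (0:ℝ) ≤ ((D i).u - C.u) * t + ((D i).r - C.r) by linarith⟩)
  refine ⟨i, j, stepB C (D i) (D j) ?_⟩
  intro t ht
  rcases hij t ht with h1 | h1
  · left
    have h1' : (0:ℝ) ≤ ((D i).u - C.u) * t + ((D i).r - C.r) := h1
    linarith
  · right
    have h1' : (0:ℝ) ≤ ((D j).u - C.u) * t + ((D j).r - C.r) := h1
    linarith
end

section
/- Up to isomorphism, the finite convex geometries of convex dimension at most 2 are exactly the convex geometries (F, ch) where F is a finite set of 1-dimensional circles, i.e., F ⊆ {(a,b) ∈ ℝ² : a ≤ b} (pairs interpreted as point-pairs {a,b} ⊆ ℝ), and ch(X) = {C ∈ F : C ⊆ conv(⋃ X)} with conv taken in ℝ. -/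
/-- The two-point set `{a, b} ⊆ ℝ` of a 1-dimensional circle `(a, b)` with `a ≤ b`. -/
def pts1 (p : ℝ × ℝ) : Set ℝ := {p.1, p.2}

/-- The closure operator of a set `F` of 1-dimensional circles:
`ch1 F X = {C ∈ F : C ⊆ conv(⋃ X)}`, with `conv` taken in `ℝ`. -/
def ch1 (F X : Set (ℝ × ℝ)) : Set (ℝ × ℝ) :=
  {C | C ∈ F ∧ pts1 C ⊆ convexHull ℝ (⋃ D ∈ X, pts1 D)}

/-- A closed set `X` of the convex geometry `(U, Φ)` is meet-irreducible in the
lattice of closed sets: it is closed, not the top element `univ`, and whenever it is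
the intersection (= meet) of two closed sets, it equals one of them. -/
def MirClosed {U : Type*} (Φ : Set U → Set U) (X : Set U) : Prop :=
  Φ X = X ∧ X ≠ Set.univ ∧
    ∀ Y Z : Set U, Φ Y = Y → Φ Z = Z → Y ∩ Z = X → Y = X ∨ Z = X

/-- The convex geometry `(U, Φ)` has convex dimension at most 2: the set of
meet-irreducible elements of its lattice of closed sets has width at most 2. -/
def CdimLe2 {U : Type*} (Φ : Set U → Set U) : Prop :=
  ∀ A : Finset (Set U), (∀ X ∈ A, MirClosed Φ X) →
    IsAntichain (· ⊆ ·) (↑A : Set (Set U)) → A.card ≤ 2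

/-!
If the meet-irreducible closed sets have width at most 2, Dilworth's theorem covers them by two
chains `T₁`, `T₂`. Every closed set is an intersection of meet-irreducibles, so it is determined
by how many members of each chain fail to contain it. Sending a point `u` to the circle
`(-#{P ∈ T₁ | u ∉ P}, #{P ∈ T₂ | u ∉ P})` therefore turns the closed sets into the sets of circles
lying in an interval `[-m₁, m₂]`, which are exactly the closed sets of `ch1`.

Conversely, a nonempty closed set of circles consists of the circles inside some `[a, b]`, so it
is the intersection of those inside `[a, ∞)` and those inside `(-∞, b]`. A meet-irreducible one
is thus empty or of one of these two kinds, and each kind forms a chain.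
-/

open Set

section Order

variable {α : Type*}

lemma IsAntichain.card_le_two_of_subset_union {r : α → α → Prop} {A : Finset α}
    (hA : IsAntichain r (A : Set α)) {C₁ C₂ : Set α} (h₁ : IsChain r C₁) (h₂ : IsChain r C₂)
    (hAC : (A : Set α) ⊆ C₁ ∪ C₂) : A.card ≤ 2 := by
  calc A.card = (A : Set α).ncard := (ncard_coe_finset A).symm
    _ = (↑A ∩ C₁ ∪ ↑A ∩ C₂).ncard := by rw [← inter_union_distrib_left, inter_eq_left.2 hAC]
    _ ≤ (↑A ∩ C₁).ncard + (↑A ∩ C₂).ncard := ncard_union_le _ _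
    _ ≤ 1 + 1 := by
      gcongr <;> exact ncard_le_one_iff_subsingleton.2
        (inter_subsingleton_of_isAntichain_of_isChain hA ‹_›)

lemma IsChain.sep_subset_sep_of_ncard_le {r : α → α → Prop} {T : Set α} (hT : IsChain r T)
    (hfin : T.Finite) {p q : α → Prop}
    (hp : ∀ a ∈ T, ∀ b ∈ T, r a b → p b → p a) (hq : ∀ a ∈ T, ∀ b ∈ T, r a b → q b → q a)
    (h : {a ∈ T | p a}.ncard ≤ {a ∈ T | q a}.ncard) : {a ∈ T | p a} ⊆ {a ∈ T | q a} := by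
  by_contra hsub
  obtain ⟨a, ⟨haT, hpa⟩, hqa⟩ := not_subset.1 hsub
  have hqp : {b ∈ T | q b} ⊆ {b ∈ T | p b} \ {a} := by
    rintro b ⟨hbT, hqb⟩
    have hba : b ≠ a := by rintro rfl; exact hqa ⟨hbT, hqb⟩
    refine ⟨⟨hbT, ?_⟩, hba⟩
    rcases hT hbT haT hba with hle | hle
    · exact hp b hbT a haT hle hpa
    · exact absurd ⟨haT, hq a haT b hbT hle hqb⟩ hqa
  have := (ncard_le_ncard hqp ((hfin.sep _).sdiff)).trans_lt
    (ncard_sdiff_singleton_lt_of_mem ⟨haT, hpa⟩ (hfin.sep _))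
  omega

variable [PartialOrder α]

lemma exists_isChain_cover_insert_of_le {C₁ C₂ : Set α} (h₁ : IsChain (· ≤ ·) C₁)
    (h₂ : IsChain (· ≤ ·) C₂) {x : α} (hI : IsChain (· ≤ ·) {c ∈ C₁ ∪ C₂ | ¬x ≤ c})
    (hIC₂ : ∀ a ∈ C₁ ∪ C₂, ¬x ≤ a → ∀ b ∈ C₂, x ≤ b → a ≤ b) :
    ∃ D₁ D₂ : Set α, IsChain (· ≤ ·) D₁ ∧ IsChain (· ≤ ·) D₂ ∧ insert x (C₁ ∪ C₂) = D₁ ∪ D₂ := by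
  refine ⟨insert x {c ∈ C₁ | x ≤ c}, {c ∈ C₁ ∪ C₂ | ¬x ≤ c} ∪ {c ∈ C₂ | x ≤ c},
    (h₁.mono (sep_subset _ _)).insert fun b hb _ => Or.inl hb.2, ?_, ?_⟩
  · rintro a (⟨ha, hxa⟩ | ⟨ha, hxa⟩) b (⟨hb, hxb⟩ | ⟨hb, hxb⟩) hab
    · exact hI ⟨ha, hxa⟩ ⟨hb, hxb⟩ hab
    · exact Or.inl (hIC₂ a ha hxa b hb hxb)
    · exact Or.inr (hIC₂ b hb hxb a ha hxa)
    · exact h₂ ha hb hab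
  · ext c
    simp only [mem_insert_iff, mem_union, mem_ofPred]
    by_cases x ≤ c <;> tauto

lemma exists_isChain_cover_insert {C₁ C₂ : Set α} (h₁ : IsChain (· ≤ ·) C₁)
    (h₂ : IsChain (· ≤ ·) C₂) (hfin : (C₁ ∪ C₂).Finite) {x : α}
    (hI : IsChain (· ≤ ·) {c ∈ C₁ ∪ C₂ | ¬x ≤ c}) :
    ∃ D₁ D₂ : Set α, IsChain (· ≤ ·) D₁ ∧ IsChain (· ≤ ·) D₂ ∧ insert x (C₁ ∪ C₂) = D₁ ∪ D₂ := by
  obtain hIe | hIne := {c ∈ C₁ ∪ C₂ | ¬x ≤ c}.eq_empty_or_nonempty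
  · refine exists_isChain_cover_insert_of_le h₁ h₂ hI fun a ha hxa => ?_
    exact absurd hIe (nonempty_of_mem (show a ∈ {c ∈ C₁ ∪ C₂ | ¬x ≤ c} from ⟨ha, hxa⟩)).ne_empty
  obtain ⟨t, ht⟩ := (hfin.sep _).exists_maximal hIne
  have below : ∀ C, IsChain (· ≤ ·) C → t ∈ C →
      ∀ a ∈ C₁ ∪ C₂, ¬x ≤ a → ∀ b ∈ C, x ≤ b → a ≤ b := by
    intro C hC htC a ha hxa b hb hxb
    have hat : a ≤ t := (hI.total ⟨ha, hxa⟩ ht.prop).elim id (ht.le_of_ge ⟨ha, hxa⟩)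
    exact hat.trans ((hC.total htC hb).resolve_right fun hbt => ht.prop.2 (hxb.trans hbt))
  rcases ht.prop.1 with htC₁ | htC₂
  · rw [union_comm] at hI hfin below ⊢
    obtain ⟨D₁, D₂, hD₁, hD₂, hD⟩ := exists_isChain_cover_insert_of_le h₂ h₁ hI (below C₁ h₁ htC₁)
    exact ⟨D₁, D₂, hD₁, hD₂, hD⟩
  · exact exists_isChain_cover_insert_of_le h₁ h₂ hI (below C₂ h₂ htC₂)

theorem exists_isChain_cover_of_width_le_two (S : Finset α)
    (hS : ∀ A ⊆ S, IsAntichain (· ≤ ·) (A : Set α) → A.card ≤ 2) :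
    ∃ C₁ C₂ : Set α, IsChain (· ≤ ·) C₁ ∧ IsChain (· ≤ ·) C₂ ∧ (S : Set α) = C₁ ∪ C₂ := by
  classical
  induction S using Finset.strongInduction with
  | H S ih =>
  obtain rfl | hne := S.eq_empty_or_nonempty
  · exact ⟨∅, ∅, IsChain.empty, IsChain.empty, by simp⟩
  obtain ⟨x, hx⟩ := Finset.exists_minimal hne
  obtain ⟨C₁, C₂, h₁, h₂, hC⟩ := ih (S.erase x) (Finset.erase_ssubset hx.prop)
    fun A hA => hS A (hA.trans (Finset.erase_subset _ _))
  have hS_eq : (S : Set α) = insert x (C₁ ∪ C₂) := by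
    rw [← hC, Finset.coe_erase, insert_sdiff_singleton, insert_eq_of_mem (Finset.mem_coe.2 hx.prop)]
  rw [hS_eq]
  refine exists_isChain_cover_insert h₁ h₂ (hC ▸ (S.erase x).finite_toSet) ?_
  -- two incomparable elements not above the minimal `x` would form a 3-antichain with `x`
  rintro a ⟨ha, hxa⟩ b ⟨hb, hxb⟩ hab
  rw [← hC, Finset.mem_coe, Finset.mem_erase] at ha hb
  have hax : ¬a ≤ x := fun h => hxa (hx.le_of_le ha.2 h)
  have hbx : ¬b ≤ x := fun h => hxb (hx.le_of_le hb.2 h)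
  by_contra hcomp
  have hanti : IsAntichain (· ≤ ·) (({x, a, b} : Finset α) : Set α) := by
    simp only [not_or] at hcomp
    simp [IsAntichain, pairwise_insert, *]
  have := hS _ (by simp [Finset.insert_subset_iff, hx.prop, ha.2, hb.2]) hanti
  rw [Finset.card_eq_three.2 ⟨x, a, b, Ne.symm ha.1, Ne.symm hb.1, hab, rfl⟩] at this
  omega

end Order

section ClosureSystem

variable {U : Type*} {Φ : Set U → Set U}

lemma closed_sInter (hext : ∀ X, X ⊆ Φ X) (hmono : ∀ X Y, X ⊆ Y → Φ X ⊆ Φ Y)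
    {𝒞 : Set (Set U)} (h𝒞 : ∀ P ∈ 𝒞, Φ P = P) : Φ (⋂₀ 𝒞) = ⋂₀ 𝒞 :=
  (subset_sInter fun P hP => h𝒞 P hP ▸ hmono _ _ (sInter_subset_of_mem hP)).antisymm (hext _)

lemma closed_inter (hext : ∀ X, X ⊆ Φ X) (hmono : ∀ X Y, X ⊆ Y → Φ X ⊆ Φ Y) {X Y : Set U}
    (hX : Φ X = X) (hY : Φ Y = Y) : Φ (X ∩ Y) = X ∩ Y := by
  rw [← sInter_pair]
  exact closed_sInter hext hmono (by simp [hX, hY])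

lemma exists_mirClosed_of_notMem [Finite U] {X : Set U} (hX : Φ X = X) {u : U} (hu : u ∉ X) :
    ∃ M, MirClosed Φ M ∧ X ⊆ M ∧ u ∉ M := by
  obtain ⟨M, hXM, hM⟩ := (toFinite {Z | Φ Z = Z ∧ u ∉ Z}).exists_le_maximal ⟨hX, hu⟩
  refine ⟨M, ⟨hM.prop.1, fun h => hM.prop.2 (h ▸ mem_univ u), fun Y Z hY hZ hYZ => ?_⟩, hXM,
    hM.prop.2⟩
  rcases not_and_or.1 fun h => hM.prop.2 (hYZ ▸ h) with huY | huZ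
  · exact Or.inl (hM.eq_of_le ⟨hY, huY⟩ (hYZ ▸ inter_subset_left)).symm
  · exact Or.inr (hM.eq_of_le ⟨hZ, huZ⟩ (hYZ ▸ inter_subset_right)).symm

end ClosureSystem

section Circles

variable {F Y : Set (ℝ × ℝ)}

lemma subset_ch1 (hY : Y ⊆ F) : Y ⊆ ch1 F Y :=
  fun _ hC => ⟨hY hC, fun _ hx => subset_convexHull ℝ _ (mem_biUnion hC hx)⟩

lemma ch1_subset : ch1 F Y ⊆ F := fun _ hC => hC.1

lemma ch1_sep_pts1_subset {K : Set ℝ} (hK : Convex ℝ K) :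
    ch1 F {p ∈ F | pts1 p ⊆ K} = {p ∈ F | pts1 p ⊆ K} :=
  subset_antisymm
    (fun _ hC => ⟨hC.1, hC.2.trans (convexHull_min (iUnion₂_subset fun _ hD => hD.2) hK)⟩)
    (subset_ch1 (sep_subset _ _))

lemma pts1_subset_Icc_iff {p : ℝ × ℝ} (hp : p.1 ≤ p.2) {a b : ℝ} :
    pts1 p ⊆ Icc a b ↔ a ≤ p.1 ∧ p.2 ≤ b := by
  simp only [pts1, insert_subset_iff, singleton_subset_iff, mem_Icc]
  constructor
  · rintro ⟨⟨ha, -⟩, -, hb⟩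
    exact ⟨ha, hb⟩
  · rintro ⟨ha, hb⟩
    exact ⟨⟨ha, hp.trans hb⟩, ha.trans hp, hb⟩

lemma exists_eq_sep_pts1_subset_Icc (hF : ∀ p ∈ F, p.1 ≤ p.2) (hY : ch1 F Y = Y)
    (hfin : Y.Finite) (hne : Y.Nonempty) :
    ∃ y₁ ∈ Y, ∃ y₂ ∈ Y, Y = {p ∈ F | pts1 p ⊆ Icc y₁.1 y₂.2} := by
  have hYF : Y ⊆ F := hY ▸ ch1_subset
  obtain ⟨y₁, hy₁, hmin⟩ := exists_min_image Y Prod.fst hfin hne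
  obtain ⟨y₂, hy₂, hmax⟩ := exists_max_image Y Prod.snd hfin hne
  refine ⟨y₁, hy₁, y₂, hy₂, subset_antisymm
    (fun p hp => ⟨hYF hp, (pts1_subset_Icc_iff (hF p (hYF hp))).2 ⟨hmin p hp, hmax p hp⟩⟩) ?_⟩
  rintro p ⟨hpF, hp⟩
  rw [← hY]
  refine ⟨hpF, hp.trans ((convex_convexHull ℝ _).ordConnected.out ?_ ?_)⟩
  · exact subset_convexHull ℝ _ (mem_biUnion hy₁ (mem_insert _ _))
  · exact subset_convexHull ℝ _ (mem_biUnion hy₂ (mem_insert_of_mem _ rfl))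

end Circles

lemma nonempty_orderIso_of_image_preimage {α β : Type*} {P : Set α → Prop} {Q : Set β → Prop}
    (f : α → β) (hPQ : ∀ X, P X → Q (f '' X)) (hQP : ∀ Y, Q Y → P (f ⁻¹' Y))
    (hP : ∀ X, P X → f ⁻¹' (f '' X) = X) (hQ : ∀ Y, Q Y → Y ⊆ range f) :
    Nonempty ({X // P X} ≃o {Y // Q Y}) :=
  ⟨{ toFun X := ⟨f '' X, hPQ _ X.2⟩
     invFun Y := ⟨f ⁻¹' Y, hQP _ Y.2⟩
     left_inv X := Subtype.ext (hP _ X.2)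
     right_inv Y := Subtype.ext (image_preimage_eq_of_subset (hQ _ Y.2))
     map_rel_iff' {X Z} := by
       refine ⟨fun h => ?_, fun h => image_mono h⟩
       change X.1 ⊆ Z.1
       rw [← hP _ X.2, ← hP _ Z.2]
       exact preimage_mono h }⟩

section ChainCoordinates

variable {U : Type*} {T₁ T₂ : Set (Set U)}

noncomputable def missCount (T : Set (Set U)) (X : Set U) : ℕ := {P ∈ T | ¬X ⊆ P}.ncard

lemma missCount_le_missCount_iff [Finite U] {T : Set (Set U)} (hT : IsChain (· ⊆ ·) T)
    {X Y : Set U} : missCount T X ≤ missCount T Y ↔ ∀ P ∈ T, Y ⊆ P → X ⊆ P := by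
  constructor
  · intro h P hP hYP
    by_contra hXP
    have hdown : ∀ Z : Set U, ∀ P ∈ T, ∀ Q ∈ T, P ⊆ Q → ¬Z ⊆ Q → ¬Z ⊆ P :=
      fun _ _ _ _ _ hPQ hZQ hZP => hZQ (hZP.trans hPQ)
    exact (hT.sep_subset_sep_of_ncard_le (toFinite T) (hdown X) (hdown Y) h ⟨hP, hXP⟩).2 hYP
  · exact fun h => ncard_le_ncard fun P ⟨hP, hXP⟩ => ⟨hP, fun hYP => hXP (h P hP hYP)⟩

lemma setOf_missCount_le_eq_sInter [Finite U] {T : Set (Set U)} (hT : IsChain (· ⊆ ·) T)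
    (u₀ : U) : {u | missCount T {u} ≤ missCount T {u₀}} = ⋂₀ {P ∈ T | u₀ ∈ P} := by
  ext u
  simp [missCount_le_missCount_iff hT]

variable (T₁ T₂) in
noncomputable def circleOf (u : U) : ℝ × ℝ := (-(missCount T₁ {u} : ℝ), (missCount T₂ {u} : ℝ))

variable (T₁ T₂) in
lemma circleOf_fst_le_snd (u : U) : (circleOf T₁ T₂ u).1 ≤ (circleOf T₁ T₂ u).2 :=
  (neg_nonpos.2 (Nat.cast_nonneg _)).trans (Nat.cast_nonneg _)

lemma pts1_circleOf_subset_Icc_iff {u : U} {k₁ k₂ : ℕ} :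
    pts1 (circleOf T₁ T₂ u) ⊆ Icc (-(k₁ : ℝ)) k₂ ↔
      missCount T₁ {u} ≤ k₁ ∧ missCount T₂ {u} ≤ k₂ := by
  rw [pts1_subset_Icc_iff (circleOf_fst_le_snd T₁ T₂ u)]
  simp [circleOf]

lemma eq_preimage_circleOf [Finite U] (hT₁ : IsChain (· ⊆ ·) T₁) (hT₂ : IsChain (· ⊆ ·) T₂)
    {X : Set U} (hX : ⋂₀ {P ∈ T₁ ∪ T₂ | X ⊆ P} ⊆ X) :
    X = circleOf T₁ T₂ ⁻¹' {p | pts1 p ⊆ Icc (-(missCount T₁ X : ℝ)) (missCount T₂ X)} := by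
  ext u
  rw [mem_preimage, mem_ofPred, pts1_circleOf_subset_Icc_iff, missCount_le_missCount_iff hT₁,
    missCount_le_missCount_iff hT₂]
  simp only [singleton_subset_iff]
  refine ⟨fun hu => ⟨fun _ _ hXP => hXP hu, fun _ _ hXP => hXP hu⟩, fun ⟨h₁, h₂⟩ => hX ?_⟩
  exact mem_sInter.2 fun P ⟨hP, hXP⟩ => hP.elim (h₁ P · hXP) (h₂ P · hXP)

variable {Φ : Set U → Set U}

lemma closed_preimage_circleOf [Finite U] (hext : ∀ X, X ⊆ Φ X)
    (hmono : ∀ X Y, X ⊆ Y → Φ X ⊆ Φ Y) (hempty : Φ ∅ = ∅) (hT₁ : IsChain (· ⊆ ·) T₁)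
    (hT₂ : IsChain (· ⊆ ·) T₂) (hclosed : ∀ P ∈ T₁ ∪ T₂, Φ P = P) {Y : Set (ℝ × ℝ)}
    (hY : ch1 (range (circleOf T₁ T₂)) Y = Y) :
    Φ (circleOf T₁ T₂ ⁻¹' Y) = circleOf T₁ T₂ ⁻¹' Y := by
  obtain rfl | hne := Y.eq_empty_or_nonempty
  · exact hempty
  have hYF : Y ⊆ range (circleOf T₁ T₂) := hY ▸ ch1_subset
  obtain ⟨_, hu₁, _, hu₂, hYeq⟩ := exists_eq_sep_pts1_subset_Icc
    (forall_mem_range.2 (circleOf_fst_le_snd T₁ T₂)) hY ((finite_range _).subset hYF) hne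
  obtain ⟨u₁, rfl⟩ := hYF hu₁
  obtain ⟨u₂, rfl⟩ := hYF hu₂
  have hpre : circleOf T₁ T₂ ⁻¹' Y = ⋂₀ ({P ∈ T₁ | u₁ ∈ P} ∪ {P ∈ T₂ | u₂ ∈ P}) := by
    rw [sInter_union, ← setOf_missCount_le_eq_sInter hT₁, ← setOf_missCount_le_eq_sInter hT₂, hYeq]
    ext u
    exact (and_iff_right (mem_range_self u)).trans pts1_circleOf_subset_Icc_iff
  rw [hpre]
  exact closed_sInter hext hmono fun P hP => hclosed P (hP.imp (·.1) (·.1))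

theorem exists_circles_orderIso [Finite U] (hext : ∀ X, X ⊆ Φ X)
    (hmono : ∀ X Y, X ⊆ Y → Φ X ⊆ Φ Y) (hempty : Φ ∅ = ∅) (hT₁ : IsChain (· ⊆ ·) T₁)
    (hT₂ : IsChain (· ⊆ ·) T₂) (hclosed : ∀ P ∈ T₁ ∪ T₂, Φ P = P)
    (hsep : ∀ X, Φ X = X → ⋂₀ {P ∈ T₁ ∪ T₂ | X ⊆ P} ⊆ X) :
    ∃ F : Set (ℝ × ℝ), F.Finite ∧ (∀ p ∈ F, p.1 ≤ p.2) ∧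
      Nonempty ({X : Set U // Φ X = X} ≃o {Y : Set (ℝ × ℝ) // Y ⊆ F ∧ ch1 F Y = Y}) := by
  refine ⟨range (circleOf T₁ T₂), finite_range _, forall_mem_range.2 (circleOf_fst_le_snd T₁ T₂),
    nonempty_orderIso_of_image_preimage (circleOf T₁ T₂) (fun X hX => ?_)
      (fun Y hY => closed_preimage_circleOf hext hmono hempty hT₁ hT₂ hclosed hY.2)
      (fun X hX => ?_) fun Y hY => hY.1⟩
  · rw [eq_preimage_circleOf hT₁ hT₂ (hsep X hX), image_preimage_eq_inter_range, inter_comm]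
    exact ⟨inter_subset_left, ch1_sep_pts1_subset (convex_Icc _ _)⟩
  · rw [eq_preimage_circleOf hT₁ hT₂ (hsep X hX), preimage_image_preimage]

end ChainCoordinates

lemma CdimLe2.exists_isChain_cover {U : Type*} [Finite U] {Φ : Set U → Set U} (h : CdimLe2 Φ) :
    ∃ T₁ T₂ : Set (Set U), IsChain (· ⊆ ·) T₁ ∧ IsChain (· ⊆ ·) T₂ ∧
      (∀ P ∈ T₁ ∪ T₂, Φ P = P) ∧ ∀ X, Φ X = X → ⋂₀ {P ∈ T₁ ∪ T₂ | X ⊆ P} ⊆ X := by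
  have hfin := toFinite {X : Set U | MirClosed Φ X}
  obtain ⟨T₁, T₂, hT₁, hT₂, hT⟩ := exists_isChain_cover_of_width_le_two hfin.toFinset
    fun A hA hanti => h A (fun X hX => hfin.mem_toFinset.1 (hA hX)) hanti
  rw [hfin.coe_toFinset] at hT
  refine ⟨T₁, T₂, hT₁, hT₂, fun P hP => ?_, fun X hX u hu => ?_⟩
  · rw [← hT] at hP
    exact hP.1
  by_contra huX
  obtain ⟨M, hM, hXM, huM⟩ := exists_mirClosed_of_notMem hX huX
  exact huM (mem_sInter.1 hu M ⟨hT ▸ hM, hXM⟩)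

section Transfer

variable {U : Type*} {Φ : Set U → Set U}

lemma isChain_setOf_orderIso_mem {α β : Type*} {P : Set α → Prop} {Q : Set β → Prop}
    (e : {X // P X} ≃o {Y // Q Y}) {𝒴 : Set (Set β)} (h𝒴 : IsChain (· ⊆ ·) 𝒴) :
    IsChain (· ⊆ ·) {X | ∃ hX : P X, (e ⟨X, hX⟩).1 ∈ 𝒴} := by
  rintro X ⟨hX, hX𝒴⟩ Z ⟨hZ, hZ𝒴⟩ -
  exact (h𝒴.total hX𝒴 hZ𝒴).imp (e.le_iff_le.1 ·) (e.le_iff_le.1 ·)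

lemma MirClosed.orderIso_eq_or_eq {β : Type*} {Q : Set β → Prop} (hext : ∀ X, X ⊆ Φ X)
    (hmono : ∀ X Y, X ⊆ Y → Φ X ⊆ Φ Y) (e : {X // Φ X = X} ≃o {Y // Q Y}) {X : Set U}
    (hX : MirClosed Φ X) {L R : {Y // Q Y}} (h : (e ⟨X, hX.1⟩).1 = L.1 ∩ R.1) :
    e ⟨X, hX.1⟩ = L ∨ e ⟨X, hX.1⟩ = R := by
  set X' : {X // Φ X = X} := ⟨X, hX.1⟩
  have hXL : X' ≤ e.symm L := e.le_symm_apply.2 (h.trans_subset inter_subset_left)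
  have hXR : X' ≤ e.symm R := e.le_symm_apply.2 (h.trans_subset inter_subset_right)
  set W : {X // Φ X = X} :=
    ⟨(e.symm L).1 ∩ (e.symm R).1, closed_inter hext hmono (e.symm L).2 (e.symm R).2⟩
  have hWX : W ≤ X' := by
    rw [← e.le_iff_le]
    change (e W).1 ⊆ (e X').1
    rw [h]
    exact subset_inter (e.le_symm_apply.1 (show W ≤ e.symm L from inter_subset_left))
      (e.le_symm_apply.1 (show W ≤ e.symm R from inter_subset_right))
  rcases hX.2.2 _ _ (e.symm L).2 (e.symm R).2 (subset_antisymm hWX (subset_inter hXL hXR))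
    with hL | hR
  · exact Or.inl (e.symm_apply_eq.1 (Subtype.ext hL)).symm
  · exact Or.inr (e.symm_apply_eq.1 (Subtype.ext hR)).symm

lemma MirClosed.orderIso_mem_rays (hext : ∀ X, X ⊆ Φ X) (hmono : ∀ X Y, X ⊆ Y → Φ X ⊆ Φ Y)
    {F : Set (ℝ × ℝ)} (hF : F.Finite) (hcirc : ∀ p ∈ F, p.1 ≤ p.2)
    (e : {X // Φ X = X} ≃o {Y // Y ⊆ F ∧ ch1 F Y = Y}) {X : Set U} (hX : MirClosed Φ X) :
    (e ⟨X, hX.1⟩).1 ∈ insert ∅ (range fun a => {p ∈ F | pts1 p ⊆ Ici a}) ∪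
      range fun b => {p ∈ F | pts1 p ⊆ Iic b} := by
  obtain ⟨hYF, hY⟩ := (e ⟨X, hX.1⟩).2
  obtain hYe | hne := (e ⟨X, hX.1⟩).1.eq_empty_or_nonempty
  · exact Or.inl (Or.inl hYe)
  obtain ⟨y₁, -, y₂, -, hYeq⟩ := exists_eq_sep_pts1_subset_Icc hcirc hY (hF.subset hYF) hne
  let L : {Y // Y ⊆ F ∧ ch1 F Y = Y} :=
    ⟨{p ∈ F | pts1 p ⊆ Ici y₁.1}, sep_subset _ _, ch1_sep_pts1_subset (convex_Ici _)⟩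
  let R : {Y // Y ⊆ F ∧ ch1 F Y = Y} :=
    ⟨{p ∈ F | pts1 p ⊆ Iic y₂.2}, sep_subset _ _, ch1_sep_pts1_subset (convex_Iic _)⟩
  have hLR : (e ⟨X, hX.1⟩).1 = L.1 ∩ R.1 := by
    rw [hYeq, ← Ici_inter_Iic]
    ext p
    simp only [L, R, mem_inter_iff, mem_sep_iff, subset_inter_iff]
    tauto
  rcases hX.orderIso_eq_or_eq hext hmono e hLR with h | h
  · exact Or.inl (Or.inr ⟨y₁.1, by rw [h]⟩)
  · exact Or.inr ⟨y₂.2, by rw [h]⟩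

theorem cdimLe2_of_orderIso (hext : ∀ X, X ⊆ Φ X) (hmono : ∀ X Y, X ⊆ Y → Φ X ⊆ Φ Y)
    {F : Set (ℝ × ℝ)} (hF : F.Finite) (hcirc : ∀ p ∈ F, p.1 ≤ p.2)
    (e : {X // Φ X = X} ≃o {Y // Y ⊆ F ∧ ch1 F Y = Y}) : CdimLe2 Φ := by
  intro A hA hanti
  have hlower : IsChain (· ⊆ ·) (insert ∅ (range fun a => {p ∈ F | pts1 p ⊆ Ici a})) :=
    (Antitone.isChain_range fun _ _ hab _ hp => ⟨hp.1, hp.2.trans (Ici_subset_Ici.2 hab)⟩).insert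
      fun Y _ _ => Or.inl (empty_subset Y)
  have hupper : IsChain (· ⊆ ·) (range fun b => {p ∈ F | pts1 p ⊆ Iic b}) :=
    Monotone.isChain_range fun _ _ hab _ hp => ⟨hp.1, hp.2.trans (Iic_subset_Iic.2 hab)⟩
  refine hanti.card_le_two_of_subset_union (isChain_setOf_orderIso_mem e hlower)
    (isChain_setOf_orderIso_mem e hupper) fun X hXA => ?_
  have hX := hA X hXA
  exact (hX.orderIso_mem_rays hext hmono hF hcirc e).imp (⟨hX.1, ·⟩) (⟨hX.1, ·⟩)

end Transfer

theorem stmt19_general {U : Type*} [Fintype U] (Φ : Set U → Set U)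
    (hext : ∀ X : Set U, X ⊆ Φ X)
    (hmono : ∀ X Y : Set U, X ⊆ Y → Φ X ⊆ Φ Y)
    (hempty : Φ ∅ = ∅) :
    CdimLe2 Φ ↔
      ∃ F : Set (ℝ × ℝ), F.Finite ∧ (∀ p ∈ F, p.1 ≤ p.2) ∧
        Nonempty ({X : Set U // Φ X = X} ≃o
          {Y : Set (ℝ × ℝ) // Y ⊆ F ∧ ch1 F Y = Y}) := by
  constructor
  · intro h
    obtain ⟨T₁, T₂, hT₁, hT₂, hclosed, hsep⟩ := h.exists_isChain_cover
    exact exists_circles_orderIso hext hmono hempty hT₁ hT₂ hclosed hsep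
  · rintro ⟨F, hF, hcirc, ⟨e⟩⟩
    exact cdimLe2_of_orderIso hext hmono hF hcirc e

/-- Up to isomorphism (order isomorphism of the lattices of closed
sets), the finite convex geometries `(U, Φ)` of convex dimension at most 2 are
exactly the convex geometries `(F, ch1)` where `F` is a finite set of 1-dimensional
circles, i.e. `F ⊆ {(a,b) ∈ ℝ² : a ≤ b}`, with `ch1 F X = {C ∈ F : C ⊆ conv(⋃ X)}`. -/
theorem stmt19 {U : Type*} [Fintype U] (Φ : Set U → Set U)
    (hext : ∀ X : Set U, X ⊆ Φ X)
    (hidem : ∀ X : Set U, Φ (Φ X) = Φ X)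
    (hmono : ∀ X Y : Set U, X ⊆ Y → Φ X ⊆ Φ Y)
    (hempty : Φ ∅ = ∅)
    (hae : ∀ X : Set U, Φ X = X → ∀ x y : U, x ∉ X → y ∉ X → x ≠ y →
      x ∈ Φ (X ∪ {y}) → y ∉ Φ (X ∪ {x})) :
    CdimLe2 Φ ↔
      ∃ F : Set (ℝ × ℝ), F.Finite ∧ (∀ p ∈ F, p.1 ≤ p.2) ∧
        Nonempty ({X : Set U // Φ X = X} ≃o
          {Y : Set (ℝ × ℝ) // Y ⊆ F ∧ ch1 F Y = Y}) :=
  stmt19_general Φ hext hmono hempty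
end
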